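/- arXiv:1411.7601 — 8 statements merged into one kernel-verified Lean document; each statement's English description precedes it below -/
import Mathlib

section
/- Let S be a convex set of d×d real symmetric positive semidefinite matrices and let Φ be a real-valued function on the positive semidefinite matrices that is concave, strictly isotonic on PD(d) (Φ(M₁) > Φ(M₂) whenever M₁ ≥ M₂ > 0 in the Loewner order and M₁ ≠ M₂), and strictly concave on PD(d) (Φ(αM₁ + (1−α)M₂) > αΦ(M₁) + (1−α)Φ(M₂) for every α ∈ (0,1), M₁ positive definite, M₂ positive semidefinite with M₂ not a scalar multiple of M₁). If M* ∈ S and M̃ ∈ S both maximize Φ over S and M* is positive definite, then M̃ = M*. -/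
/-!
Let `M` be the midpoint of the two maximizers; it lies in `S`, so by concavity it is a
maximizer too. Strict concavity then forces `M̃ = t • M*`, with `t ≥ 0` by positive
semidefiniteness, so `M = ((1 + t) / 2) • M*`. Strict isotonicity makes `c ↦ Φ (c • M*)`
strictly increasing on `(0, ∞)`, so `Φ M = Φ M*` gives `(1 + t) / 2 = 1`, i.e. `M̃ = M*`.
-/

open Matrix Set

namespace Matrix

variable {n : Type*} [Fintype n] [Nonempty n]

theorem PosDef.nonneg_of_posSemidef_smul {A : Matrix n n ℝ} (hA : A.PosDef) {t : ℝ}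
    (htA : (t • A).PosSemidef) : 0 ≤ t := by
  have h := htA.trace_nonneg
  rw [trace_smul, smul_eq_mul] at h
  exact nonneg_of_mul_nonneg_left h hA.trace_pos

theorem PosDef.ne_zero {A : Matrix n n ℝ} (hA : A.PosDef) : A ≠ 0 := by
  rintro rfl
  simpa using hA.trace_pos

theorem PosDef.smul_left_injective {A : Matrix n n ℝ} (hA : A.PosDef) :
    Function.Injective fun c : ℝ => c • A :=
  _root_.smul_left_injective ℝ hA.ne_zero

theorem strictMonoOn_smul_of_strictIso {Φ : Matrix n n ℝ → ℝ}
    (hStrictIso : ∀ A B : Matrix n n ℝ, B.PosDef → (A - B).PosSemidef → A ≠ B → Φ B < Φ A)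
    {A : Matrix n n ℝ} (hA : A.PosDef) : StrictMonoOn (fun c : ℝ => Φ (c • A)) (Ioi 0) := by
  intro a ha b _ hab
  refine hStrictIso _ _ (hA.smul ha) ?_ (hab.ne' <| hA.smul_left_injective ·)
  rw [← sub_smul]
  exact hA.posSemidef.smul (sub_nonneg.mpr hab.le)

end Matrix

/-- two maximizers of a strictly isotonic, strictly concave criterion over a
convex set of positive semidefinite matrices coincide if one of them is positive definite. -/
theorem stmt3 {d : ℕ} (S : Set (Matrix (Fin d) (Fin d) ℝ))
    (hSpsd : ∀ A ∈ S, A.PosSemidef)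
    (hSconv : ∀ A ∈ S, ∀ B ∈ S, ∀ α : ℝ, 0 ≤ α → α ≤ 1 → α • A + (1 - α) • B ∈ S)
    (Φ : Matrix (Fin d) (Fin d) ℝ → ℝ)
    (hConcave : ∀ A B : Matrix (Fin d) (Fin d) ℝ, A.PosSemidef → B.PosSemidef →
      ∀ α : ℝ, 0 < α → α < 1 → α * Φ A + (1 - α) * Φ B ≤ Φ (α • A + (1 - α) • B))
    (hStrictIso : ∀ A B : Matrix (Fin d) (Fin d) ℝ, B.PosDef → (A - B).PosSemidef →
      A ≠ B → Φ B < Φ A)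
    (hStrictConc : ∀ A B : Matrix (Fin d) (Fin d) ℝ, A.PosDef → B.PosSemidef →
      (∀ t : ℝ, B ≠ t • A) → ∀ α : ℝ, 0 < α → α < 1 →
      α * Φ A + (1 - α) * Φ B < Φ (α • A + (1 - α) • B))
    (Mstar Mtil : Matrix (Fin d) (Fin d) ℝ)
    (hMstarS : Mstar ∈ S) (hMtilS : Mtil ∈ S)
    (hMstarPD : Mstar.PosDef)
    (hMstarMax : ∀ A ∈ S, Φ A ≤ Φ Mstar)
    (hMtilMax : ∀ A ∈ S, Φ A ≤ Φ Mtil) :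
    Mtil = Mstar := by
  cases isEmpty_or_nonempty (Fin d)
  · exact Subsingleton.elim _ _
  have hΦ : Φ Mtil = Φ Mstar := le_antisymm (hMstarMax _ hMtilS) (hMtilMax _ hMstarS)
  have hmid_le := hMstarMax _ (hSconv _ hMstarS _ hMtilS (1 / 2) (by norm_num) (by norm_num))
  obtain ⟨t, rfl⟩ : ∃ t : ℝ, Mtil = t • Mstar := by
    by_contra! hscal
    have := hStrictConc _ _ hMstarPD (hSpsd _ hMtilS) hscal (1 / 2) (by norm_num) (by norm_num)
    linarith
  have ht : 0 ≤ t := hMstarPD.nonneg_of_posSemidef_smul (hSpsd _ hMtilS)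
  have hmid_ge := hConcave _ _ hMstarPD.posSemidef (hSpsd _ hMtilS) (1 / 2) (by norm_num)
    (by norm_num)
  have hmid : (1 / 2 : ℝ) • Mstar + (1 - 1 / 2 : ℝ) • t • Mstar = ((1 + t) / 2) • Mstar := by
    module
  rw [hmid] at hmid_le hmid_ge
  have hc : (1 + t) / 2 = 1 :=
    (strictMonoOn_smul_of_strictIso hStrictIso hMstarPD).injOn (by simp; positivity)
      (by simp) (by simp only [one_smul]; linarith)
  obtain rfl : t = 1 := by linarith
  exact one_smul ℝ Mstar
end

section
/- Let m ≥ 1 and let {Ψ₀, Ψ₁, …, Ψ_{2m−2}} be a Chebyshev system on a real interval [A,B] with Ψ₀ ≡ 1. Let A = c₁ < c₂ < … < c_m ≤ B with weights ω₁, …, ω_m ≥ 0, and A = c̃₁ < c̃₂ < … < c̃_m ≤ B with weights ω̃₁, …, ω̃_m ≥ 0, be such that Σ_{i=1}^m ω_i Ψ_ℓ(c_i) = Σ_{j=1}^m ω̃_j Ψ_ℓ(c̃_j) for every ℓ = 0, 1, …, 2m−2. Then the two weighted point configurations define the same discrete measure: Σ_{i=1}^m ω_i δ_{c_i} = Σ_{j=1}^m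 ω̃_j δ_{c̃_j} (equivalently, Σ_i ω_i g(c_i) = Σ_j ω̃_j g(c̃_j) for every function g on [A,B]). -/
def IsChebyshev {n : ℕ} (g : Fin n → ℝ → ℝ) (T : Set ℝ) : Prop :=
  ∀ t : Fin n → ℝ, StrictMono t → (∀ i, t i ∈ T) →
    (Matrix.of fun i j => g j (t i)).det ≠ 0

lemma stmt5_fiber {m : ℕ} (S : Finset ℝ) (c : Fin m → ℝ) (ω : Fin m → ℝ)
    (hc : ∀ i, c i ∈ S) (g : ℝ → ℝ) :
    ∑ x ∈ S, (∑ i ∈ Finset.univ.filter (fun i => c i = x), ω i) * g x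
      = ∑ i, ω i * g (c i) := by
  rw [← Finset.sum_fiberwise_of_maps_to (fun i _ => hc i) (fun i => ω i * g (c i))]
  refine Finset.sum_congr rfl fun x hx => ?_
  rw [Finset.sum_mul]
  exact Finset.sum_congr rfl fun i hi => by rw [(Finset.mem_filter.mp hi).2]

/-- moment-matching uniqueness for a Chebyshev system `{Ψ₀,…,Ψ_{2m-2}}`
with `Ψ₀ ≡ 1`: two `m`-point configurations starting at the left endpoint `A` with the
same `Ψ`-moments define the same discrete measure. -/
theorem stmt5 (m : ℕ) (hm : 1 ≤ m) (A B : ℝ) (hAB : A ≤ B)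
    (Ψ : Fin (2 * m - 1) → ℝ → ℝ)
    (hΨ0 : Ψ ⟨0, by omega⟩ = fun _ => 1)
    (hCheb : IsChebyshev Ψ (Set.Icc A B))
    (c c' : Fin m → ℝ) (ω ω' : Fin m → ℝ)
    (hc0 : c ⟨0, hm⟩ = A) (hc0' : c' ⟨0, hm⟩ = A)
    (hc : StrictMono c) (hc' : StrictMono c')
    (hcB : ∀ i, c i ≤ B) (hcB' : ∀ i, c' i ≤ B)
    (hω : ∀ i, 0 ≤ ω i) (hω' : ∀ i, 0 ≤ ω' i)
    (hmom : ∀ ℓ : Fin (2 * m - 1),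
      ∑ i, ω i * Ψ ℓ (c i) = ∑ j, ω' j * Ψ ℓ (c' j)) :
    ∀ g : ℝ → ℝ, ∑ i, ω i * g (c i) = ∑ j, ω' j * g (c' j) := by
  intro g
  -- lower bound on points
  have hcA : ∀ i, A ≤ c i := fun i => hc0 ▸ hc.monotone (show (⟨0, hm⟩ : Fin m) ≤ i from Fin.mk_le_of_le_val (Nat.zero_le _))
  have hcA' : ∀ i, A ≤ c' i := fun i => hc0' ▸ hc'.monotone (show (⟨0, hm⟩ : Fin m) ≤ i from Fin.mk_le_of_le_val (Nat.zero_le _))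
  rcases eq_or_lt_of_le hAB with hEq | hlt
  · -- A = B : then m = 1
    have hm1 : m = 1 := by
      by_contra h
      have h2 : 2 ≤ m := by omega
      have h01 : c ⟨0, hm⟩ < c ⟨1, h2⟩ := hc (by simp [Fin.lt_def])
      have hB := hcB ⟨1, h2⟩
      rw [hc0] at h01
      linarith
    subst hm1
    have h0 := hmom ⟨0, by omega⟩
    rw [hΨ0] at h0
    simp only [Fin.sum_univ_one] at h0 ⊢
    have hc00 : c 0 = c' 0 := by
      have : (0 : Fin 1) = ⟨0, hm⟩ := rfl
      rw [this, hc0, hc0']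
    rw [hc00]
    have : ω 0 = ω' 0 := by simpa using h0
    rw [this]
  · -- A < B
    -- the support set
    set Cs : Finset ℝ := Finset.univ.image c with hCs
    set Cs' : Finset ℝ := Finset.univ.image c' with hCs'
    set S : Finset ℝ := Cs ∪ Cs' with hS
    have hcS : ∀ i, c i ∈ S := fun i => Finset.mem_union_left _ (Finset.mem_image_of_mem c (Finset.mem_univ i))
    have hcS' : ∀ i, c' i ∈ S := fun i => Finset.mem_union_right _ (Finset.mem_image_of_mem c' (Finset.mem_univ i))
    have hScard : S.card ≤ 2 * m - 1 := by
      have hkey : S.card + (Cs ∩ Cs').card = Cs.card + Cs'.card :=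
        Finset.card_union_add_card_inter Cs Cs'
      have h1 : Cs.card = m := by
        rw [hCs, Finset.card_image_of_injective _ hc.injective, Finset.card_univ, Fintype.card_fin]
      have h2 : Cs'.card = m := by
        rw [hCs', Finset.card_image_of_injective _ hc'.injective, Finset.card_univ, Fintype.card_fin]
      have hA : A ∈ Cs ∩ Cs' := by
        rw [Finset.mem_inter]
        exact ⟨hc0 ▸ Finset.mem_image_of_mem c (Finset.mem_univ _),
               hc0' ▸ Finset.mem_image_of_mem c' (Finset.mem_univ _)⟩
      have : 1 ≤ (Cs ∩ Cs').card := Finset.card_pos.mpr ⟨A, hA⟩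
      omega
    have hSIcc : ∀ x ∈ S, x ∈ Set.Icc A B := by
      intro x hx
      rcases Finset.mem_union.mp hx with h | h
      · obtain ⟨i, _, rfl⟩ := Finset.mem_image.mp h
        exact ⟨hcA i, hcB i⟩
      · obtain ⟨i, _, rfl⟩ := Finset.mem_image.mp h
        exact ⟨hcA' i, hcB' i⟩
    -- pad S to exactly n points inside Icc A B
    have hinf : (Set.Icc A B \ ↑S).Infinite := (Set.Icc_infinite hlt).diff S.finite_toSet
    obtain ⟨E, hEsub, hEcard⟩ := hinf.exists_subset_card_eq (2 * m - 1 - S.card)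
    set S' : Finset ℝ := S ∪ E with hS'
    have hdisj : Disjoint S E := by
      rw [Finset.disjoint_right]
      intro x hxE hxS
      exact (hEsub hxE).2 hxS
    have hS'card : S'.card = 2 * m - 1 := by
      rw [hS', Finset.card_union_of_disjoint hdisj, hEcard]; omega
    have hSS' : S ⊆ S' := Finset.subset_union_left
    have hS'Icc : ∀ x ∈ S', x ∈ Set.Icc A B := by
      intro x hx
      rcases Finset.mem_union.mp hx with h | h
      · exact hSIcc x h
      · exact (hEsub h).1
    -- the enumeration
    set t : Fin (2 * m - 1) → ℝ := fun i => (S'.orderIsoOfFin hS'card i : ℝ) with ht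
    have ht_mono : StrictMono t := fun i j h => (S'.orderIsoOfFin hS'card).strictMono h
    have ht_mem : ∀ i, t i ∈ Set.Icc A B := fun i => hS'Icc _ (S'.orderIsoOfFin hS'card i).2
    have hS'image : S' = Finset.univ.image t := by
      ext x
      simp only [Finset.mem_image, Finset.mem_univ, true_and]
      constructor
      · intro hx
        exact ⟨(S'.orderIsoOfFin hS'card).symm ⟨x, hx⟩,
          congrArg Subtype.val ((S'.orderIsoOfFin hS'card).apply_symm_apply ⟨x, hx⟩)⟩
      · rintro ⟨i, rfl⟩
        exact (S'.orderIsoOfFin hS'card i).2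
    -- the signed weight function
    set a : ℝ → ℝ := fun x =>
      (∑ i ∈ Finset.univ.filter (fun i => c i = x), ω i)
        - (∑ j ∈ Finset.univ.filter (fun j => c' j = x), ω' j) with ha
    have hkey : ∀ f : ℝ → ℝ, ∑ x ∈ S, a x * f x
        = (∑ i, ω i * f (c i)) - (∑ j, ω' j * f (c' j)) := by
      intro f
      simp only [ha, sub_mul]
      rw [Finset.sum_sub_distrib, stmt5_fiber S c ω hcS f, stmt5_fiber S c' ω' hcS' f]
    have ha_zero_off : ∀ x ∉ S, a x = 0 := by
      intro x hx
      have h1 : Finset.univ.filter (fun i => c i = x) = ∅ := by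
        rw [Finset.filter_eq_empty_iff]
        intro i _ hci
        exact hx (hci ▸ hcS i)
      have h2 : Finset.univ.filter (fun j => c' j = x) = ∅ := by
        rw [Finset.filter_eq_empty_iff]
        intro j _ hcj
        exact hx (hcj ▸ hcS' j)
      simp [ha, h1, h2]
    have hkey' : ∀ f : ℝ → ℝ, ∑ x ∈ S', a x * f x = ∑ x ∈ S, a x * f x := by
      intro f
      exact (Finset.sum_subset hSS' fun x _ hx => by rw [ha_zero_off x hx, zero_mul]).symm
    -- the vector b and matrix M
    set b : Fin (2 * m - 1) → ℝ := fun i => a (t i) with hb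
    set M : Matrix (Fin (2 * m - 1)) (Fin (2 * m - 1)) ℝ := Matrix.of fun i j => Ψ j (t i) with hM
    have hdet : M.det ≠ 0 := hCheb t ht_mono (fun i => ht_mem i)
    have hsum_t : ∀ f : ℝ → ℝ, ∑ i, a (t i) * f (t i) = ∑ x ∈ S', a x * f x := by
      intro f
      rw [hS'image, Finset.sum_image (fun i _ j _ h => ht_mono.injective h)]
    have hbM : Matrix.vecMul b M = 0 := by
      funext ℓ
      have h1 : Matrix.vecMul b M ℓ = ∑ i, a (t i) * Ψ ℓ (t i) := by
        simp [Matrix.vecMul, dotProduct, hb, hM]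
      rw [h1, hsum_t (Ψ ℓ), hkey' (Ψ ℓ), hkey (Ψ ℓ), hmom ℓ, sub_self]
      simp
    have hb0 : b = 0 := by
      have hMu : IsUnit M.det := isUnit_iff_ne_zero.mpr hdet
      have := congrArg (fun v => Matrix.vecMul v M⁻¹) hbM
      simpa [Matrix.vecMul_vecMul, Matrix.mul_nonsing_inv M hMu] using this
    -- conclude
    have ha0 : ∀ x ∈ S, a x = 0 := by
      intro x hx
      have hx' : x ∈ S' := hSS' hx
      have h1 : a (t ((S'.orderIsoOfFin hS'card).symm ⟨x, hx'⟩)) = 0 := by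
        have := congrFun hb0 ((S'.orderIsoOfFin hS'card).symm ⟨x, hx'⟩)
        simpa [hb] using this
      have h2 : t ((S'.orderIsoOfFin hS'card).symm ⟨x, hx'⟩) = x :=
        congrArg Subtype.val ((S'.orderIsoOfFin hS'card).apply_symm_apply ⟨x, hx'⟩)
      rwa [h2] at h1
    have := hkey g
    rw [Finset.sum_eq_zero (fun x hx => by rw [ha0 x hx, zero_mul])] at this
    linarith [this]
end

section
/- Let m ≥ 2 and let Ψ₁, …, Ψ_{2m−2} : [A,B] → ℝ be continuously differentiable functions such that the family of derivatives {Ψ₁′, …, Ψ_{2m−2}′} is a Chebyshev system on [A,B]. Then for any points A = c₁ < c₂ < … < c_m ≤ B, the (2m−1)×(2m−1) matrix whose first m columns are the vectors (1, Ψ₁(c_j), Ψ₂(c_j), …, Ψ_{2m−2}(c_j))ᵀ for j = 1, …, m, and whose remaining m−1 columns are the vectors (0, Ψ₁′(c_j), Ψ₂′(c_j), …, Ψ_{2m−2}′(c_j))ᵀ for j = 2, …, m, has nonzero determinant. -/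
open Finset

theorem Fin.sum_univ_eq_add_sum_of_eq_succ {M : Type*} [AddCommMonoid M] {N n : ℕ}
    (hN : N = n + 1) (f : Fin N → M) :
    ∑ i, f i = f ⟨0, by omega⟩ + ∑ k : Fin n, f ⟨k + 1, by omega⟩ := by
  subst hN
  exact Fin.sum_univ_succ f

theorem card_le_card_sdiff_add_one_of_hasDerivAt {f f' : ℝ → ℝ} {s : Set ℝ}
    (hs : s.OrdConnected) (hf : ContinuousOn f s)
    (hff' : ∀ x ∈ interior s, HasDerivAt f (f' x) x) {S T : Finset ℝ} (hSs : ↑S ⊆ s)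
    (hS : ∀ x ∈ S, f x = 0) (hT : ∀ x ∈ interior s, f' x = 0 → x ∈ T) :
    #S ≤ #(T \ S) + 1 := by
  refine card_le_sdiff_of_interleaved fun x hx y hy hxy _ => ?_
  have hIcc : Set.Icc x y ⊆ s := hs.out (hSs hx) (hSs hy)
  have hIoo : Set.Ioo x y ⊆ interior s :=
    isOpen_Ioo.subset_interior_iff.2 (Set.Ioo_subset_Icc_self.trans hIcc)
  obtain ⟨z, hz, hz0⟩ := exists_hasDerivAt_eq_zero hxy (hf.mono hIcc)
    ((hS x hx).trans (hS y hy).symm) fun z hz => hff' z (hIoo hz)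
  exact ⟨z, hT z (hIoo hz) hz0, hz⟩

namespace IsChebyshev

variable {n : ℕ} {g : Fin n → ℝ → ℝ} {T : Set ℝ} {w : Fin n → ℝ}

theorem card_lt (h : IsChebyshev g T) (hw : w ≠ 0) {S : Finset ℝ} (hST : ↑S ⊆ T)
    (hS : ∀ x ∈ S, ∑ k, w k * g k x = 0) : #S < n := by
  by_contra! hn
  obtain ⟨S', hS'S, hcard⟩ := exists_subset_card_eq hn
  have hmem (i : Fin n) : S'.orderEmbOfFin hcard i ∈ S := hS'S (S'.orderEmbOfFin_mem hcard i)
  refine h _ (S'.orderEmbOfFin hcard).strictMono (fun i => hST (hmem i))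
    (Matrix.exists_mulVec_eq_zero_iff.1 ⟨w, hw, funext fun i => ?_⟩)
  simpa [Matrix.mulVec, dotProduct, mul_comm] using hS _ (hmem i)

theorem finite_zeros (h : IsChebyshev g T) (hw : w ≠ 0) :
    {x ∈ T | ∑ k, w k * g k x = 0}.Finite := by
  by_contra hinf
  obtain ⟨S, hS, hcard⟩ := Set.Infinite.exists_subset_card_eq hinf n
  exact (h.card_lt hw (fun x hx => (hS hx).1) fun x hx => (hS hx).2).ne hcard

theorem eq_zero_of_hermite_zeros {s : Set ℝ} {a : ℝ} (hs : s.OrdConnected)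
    (hg : ∀ k, DifferentiableOn ℝ (g k) s) (h : IsChebyshev (fun k => derivWithin (g k) s) s)
    {S : Finset ℝ} (hSs : ↑S ⊆ s) (x₀ : ℝ)
    (hn : n + 2 ≤ 2 * #S) (hval : ∀ x ∈ S, a + ∑ k, w k * g k x = 0)
    (hder : ∀ x ∈ S, x ≠ x₀ → ∑ k, w k * derivWithin (g k) s x = 0) : w = 0 := by
  by_contra hw
  set Z := (h.finite_zeros hw).toFinset
  have hcont : ContinuousOn (fun x => a + ∑ k, w k * g k x) s :=
    continuousOn_const.add <| continuousOn_finsetSum _ fun k _ =>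
      continuousOn_const.mul (hg k).continuousOn
  have hderiv : ∀ x ∈ interior s, HasDerivAt (fun x => a + ∑ k, w k * g k x)
      (∑ k, w k * derivWithin (g k) s x) x := fun x hx =>
    (HasDerivAt.fun_sum fun k _ => ((hg k x (interior_subset hx)).hasDerivWithinAt.hasDerivAt
      (mem_interior_iff_mem_nhds.1 hx)).const_mul (w k)).const_add a
  have hRolle : #S ≤ #(Z \ S) + 1 :=
    card_le_card_sdiff_add_one_of_hasDerivAt hs hcont hderiv hSs hval
      fun x hx hx0 => by simpa [Z] using ⟨interior_subset hx, hx0⟩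
  have hnodes : S.erase x₀ ⊆ Z ∩ S := fun x hx => by
    obtain ⟨hx0, hxS⟩ := mem_erase.1 hx
    simpa [Z, hxS] using ⟨hSs hxS, hder x hxS hx0⟩
  have hZ : #Z < n := h.card_lt hw (fun x hx => ((h.finite_zeros hw).mem_toFinset.1 hx).1)
    fun x hx => ((h.finite_zeros hw).mem_toFinset.1 hx).2
  -- `#Z = #(Z \ S) + #(Z ∩ S) ≥ (#S - 1) + (#S - 1) ≥ n`
  have := card_sdiff_add_card_inter Z S
  have := card_le_card hnodes
  have := pred_card_le_card_erase (s := S) (a := x₀)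
  omega

end IsChebyshev

/-- nonsingularity of the Jacobian matrix built from values and derivatives of
functions whose derivative family is a Chebyshev system. -/
theorem stmt6 (m : ℕ) (hm : 2 ≤ m) (A B : ℝ)
    (Ψ : Fin (2 * m - 2) → ℝ → ℝ)
    (hΨsmooth : ∀ k, ContDiffOn ℝ 1 (Ψ k) (Set.Icc A B))
    (hCheb' : IsChebyshev (fun k : Fin (2 * m - 2) => derivWithin (Ψ k) (Set.Icc A B))
      (Set.Icc A B))
    (c : Fin m → ℝ) (hc0 : c ⟨0, by omega⟩ = A) (hc : StrictMono c)
    (hcB : ∀ j, c j ≤ B) :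
    (Matrix.of fun i j : Fin (2 * m - 1) =>
      if hi : (i : ℕ) = 0 then
        (if (j : ℕ) < m then (1 : ℝ) else 0)
      else
        (if hj : (j : ℕ) < m then
          Ψ ⟨(i : ℕ) - 1, by have := i.isLt; omega⟩ (c ⟨j, hj⟩)
        else
          derivWithin (Ψ ⟨(i : ℕ) - 1, by have := i.isLt; omega⟩) (Set.Icc A B)
            (c ⟨(j : ℕ) - m + 1, by have := j.isLt; omega⟩))).det ≠ 0 := by
  rw [Ne, ← Matrix.exists_vecMul_eq_zero_iff]
  rintro ⟨v, hv0, hv⟩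
  set w : Fin (2 * m - 2) → ℝ := fun k => v ⟨k + 1, by omega⟩
  have hsplit :=
    Fin.sum_univ_eq_add_sum_of_eq_succ (M := ℝ) (show 2 * m - 1 = 2 * m - 2 + 1 by omega)
  have hval (j : Fin m) : v ⟨0, by omega⟩ + ∑ k, w k * Ψ k (c j) = 0 := by
    simpa [Matrix.vecMul, dotProduct, hsplit, w] using congrFun hv ⟨j, by omega⟩
  have hder (j : Fin m) (hj : (j : ℕ) ≠ 0) :
      ∑ k, w k * derivWithin (Ψ k) (Set.Icc A B) (c j) = 0 := by
    have hcol : ¬ m + j - 1 < m := by omega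
    have hnode : m + j - 1 - m + 1 = j := by omega
    simpa [Matrix.vecMul, dotProduct, hsplit, hcol, hnode] using
      congrFun hv ⟨m + j - 1, by omega⟩
  have hcI (j : Fin m) : c j ∈ Set.Icc A B :=
    ⟨hc0 ▸ hc.monotone (Fin.mk_le_of_le_val (Nat.zero_le _)), hcB j⟩
  have hw : w = 0 := by
    refine hCheb'.eq_zero_of_hermite_zeros Set.ordConnected_Icc
      (fun k => (hΨsmooth k).differentiableOn one_ne_zero) (S := univ.image c)
      (by simpa [Set.range_subset_iff] using hcI) (c ⟨0, by omega⟩) ?_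
      (by simpa using hval) ?_
    · rw [card_image_of_injective _ hc.injective, card_univ, Fintype.card_fin]
      omega
    · simp only [mem_image, mem_univ, true_and, forall_exists_index, forall_apply_eq_imp_iff]
      exact fun j hj => hder j fun h => hj (congrArg c (Fin.ext h))
  have ha : v ⟨0, by omega⟩ = 0 := by simpa [hw] using hval ⟨0, by omega⟩
  refine hv0 (funext fun ⟨i, hi⟩ => ?_)
  cases i with
  | zero => exact ha
  | succ k => exact congrFun hw ⟨k, by omega⟩
end

section
/- Let d ≥ 1, m ≥ d, and let [L,B] be a compact real interval (the full design region). Let M : [L,B] → Sym⁺(d) be continuously differentiable, let Ψ₀ ≡ 1 and Ψ₁, …, Ψ_{2m−2} : [L,B] → ℝ be continuously differentiable with {Ψ₀, …, Ψ_{2m−2}} and {Ψ₁′, …, Ψ_{2m−2}′} Chebyshev systems on [L,B], and assume the complete-class property on [L,B]: for every design ξ on [L,B] there exists a design ξ̃ with at most m design points, one of which is L, with ∫Ψ_ℓ dξ̃ = ∫Ψ_ℓ dξ for ℓ = 0,…,2m−2 and M_{ξ̃} ≥ M_ξ in the Loewner order. Let Φ be an optimality criterion, let ξ** be the unique design maximizing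 Φ(M_ξ) over all designs on [L,B], assume ξ** has exactly m support points, and let x_max** be its largest support point. Let U ∈ (L,B] and assume the design maximizing Φ(M_ξ) over all designs on [L,U] is unique with exactly m support points. Then: if U < x_max**, the Φ-optimal design on [L,U] has both L and U among its support points; and if U ≥ x_max**, the Φ-optimal design on [L,U] is ξ**. -/
attribute [local instance] Matrix.normedAddCommGroup Matrix.normedSpace

structure Design (I : Set ℝ) where
  pts : Finset ℝ
  w : ℝ → ℝ
  mem_pts : ∀ x ∈ pts, x ∈ I
  w_nonneg : ∀ x ∈ pts, 0 ≤ w x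
  w_sum : ∑ x ∈ pts, w x = 1

noncomputable def Design.supp {I : Set ℝ} (ξ : Design I) : Finset ℝ :=
  ξ.pts.filter (fun x => 0 < ξ.w x)

noncomputable def infoMat {d : ℕ} (M : ℝ → Matrix (Fin d) (Fin d) ℝ) {I : Set ℝ}
    (ξ : Design I) : Matrix (Fin d) (Fin d) ℝ :=
  ∑ x ∈ ξ.pts, ξ.w x • M x

structure IsOptCriterion {d : ℕ} (Φ : Matrix (Fin d) (Fin d) ℝ → ℝ) : Prop where
  nonneg : ∀ A : Matrix (Fin d) (Fin d) ℝ, A.PosSemidef → 0 ≤ Φ A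
  nonconst : ∃ A B : Matrix (Fin d) (Fin d) ℝ, A.PosSemidef ∧ B.PosSemidef ∧ Φ A ≠ Φ B
  concave : ∀ A B : Matrix (Fin d) (Fin d) ℝ, A.PosSemidef → B.PosSemidef →
    ∀ α : ℝ, 0 < α → α < 1 → α * Φ A + (1 - α) * Φ B ≤ Φ (α • A + (1 - α) • B)
  isotonic : ∀ A B : Matrix (Fin d) (Fin d) ℝ, B.PosSemidef → (A - B).PosSemidef →
    Φ B ≤ Φ A
  smooth : ContDiffOn ℝ 1 Φ {A : Matrix (Fin d) (Fin d) ℝ | A.PosDef}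

noncomputable def infoOf {d : ℕ} (m : ℕ) (M : ℝ → Matrix (Fin d) (Fin d) ℝ) (L : ℝ)
    (x w : Fin (m - 1) → ℝ) : Matrix (Fin d) (Fin d) ℝ :=
  (1 - ∑ i, w i) • M L + ∑ i, w i • M (x i)

/-- Two (finitely supported) designs coincide as discrete measures. -/
def sameMeasure {I J : Set ℝ} (ξ : Design I) (η : Design J) : Prop :=
  ∀ g : ℝ → ℝ, ∑ y ∈ ξ.pts, ξ.w y * g y = ∑ y ∈ η.pts, η.w y * g y

/-!
Against a Chebyshev system of `2m - 1` functions, two designs with the same moments coincide as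
soon as their supports have at most `2m - 1` points together; with `2m` points, their signed
difference is proportional to the alternating maximal minors, so its weights at the smallest and
the largest point have opposite signs.

`L` supports `ξ_U`: its complete-class reduction `ξ'` has the same moments and at most `m` points,
one of them `L`. If the two supports have at most `2m - 1` points together, `ξ' = ξ_U`. Otherwise
they are disjoint with `m` points each and the smallest, `L`, lies in `supp ξ'`, so the largest
lies in `supp ξ_U ⊆ [L, U]`; then `ξ'` is a design on `[L, U]` at least as good as `ξ_U`, hence
equal to it, which is absurd.

If `U < x**_max` and `U ∉ supp ξ_U`, then `ξ_U` is strictly worse than `ξ**`, so by concavity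
every mixture `t ξ** + (1 - t) ξ_U` beats `ξ_U`, and so do its reductions, which therefore have a
point beyond `U`. As `t → 0`, a subsequence of these reductions converges to a design with at most
`m` points, among them `L` and a point `≥ U`, with the moments of `ξ_U`; by the Chebyshev property
it is `ξ_U`, whose support lies below `U`.

If `x**_max ≤ U`, then `ξ**` is a design on `[L, U]`, hence optimal there.
-/

open Finset Filter Topology
open scoped Matrix

namespace Design

variable {I J : Set ℝ}

def integral (ξ : Design I) (g : ℝ → ℝ) : ℝ :=
  ∑ y ∈ ξ.pts, ξ.w y * g y

-- `ξ.w` is arbitrary off `ξ.pts`; `mass` is the weight function of the measure.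
noncomputable def mass (ξ : Design I) (x : ℝ) : ℝ :=
  if x ∈ ξ.pts then ξ.w x else 0

theorem supp_subset_pts (ξ : Design I) : ξ.supp ⊆ ξ.pts :=
  filter_subset _ _

theorem mem_of_mem_supp (ξ : Design I) {x : ℝ} (hx : x ∈ ξ.supp) : x ∈ I :=
  ξ.mem_pts x (ξ.supp_subset_pts hx)

theorem coe_supp_union_subset (ξ η : Design I) : ↑(ξ.supp ∪ η.supp) ⊆ I := fun _ hx =>
  (mem_union.1 hx).elim ξ.mem_of_mem_supp η.mem_of_mem_supp

theorem pts_nonempty (ξ : Design I) : ξ.pts.Nonempty :=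
  nonempty_of_sum_ne_zero (by rw [ξ.w_sum]; exact one_ne_zero)

theorem w_le_one (ξ : Design I) {x : ℝ} (hx : x ∈ ξ.pts) : ξ.w x ≤ 1 :=
  ξ.w_sum ▸ single_le_sum ξ.w_nonneg hx

theorem w_eq_zero_of_notMem_supp (ξ : Design I) {x : ℝ} (hx : x ∈ ξ.pts) (h : x ∉ ξ.supp) :
    ξ.w x = 0 :=
  le_antisymm (not_lt.1 fun hw => h (mem_filter.2 ⟨hx, hw⟩)) (ξ.w_nonneg x hx)

theorem mass_nonneg (ξ : Design I) (x : ℝ) : 0 ≤ ξ.mass x := by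
  unfold mass
  split_ifs with hx
  exacts [ξ.w_nonneg x hx, le_rfl]

theorem mass_pos_iff (ξ : Design I) {x : ℝ} : 0 < ξ.mass x ↔ x ∈ ξ.supp := by
  simp only [mass, supp, mem_filter]
  split_ifs with hx <;> simp [hx]

theorem mass_eq_zero_of_notMem_supp (ξ : Design I) {x : ℝ} (h : x ∉ ξ.supp) : ξ.mass x = 0 :=
  le_antisymm (not_lt.1 (mt ξ.mass_pos_iff.1 h)) (ξ.mass_nonneg x)

theorem sum_supp_smul {E : Type*} [AddCommMonoid E] [Module ℝ E] (ξ : Design I) (F : ℝ → E) :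
    ∑ x ∈ ξ.supp, ξ.w x • F x = ∑ x ∈ ξ.pts, ξ.w x • F x :=
  sum_subset ξ.supp_subset_pts fun x hx h => by rw [ξ.w_eq_zero_of_notMem_supp hx h, zero_smul]

theorem sum_supp_w (ξ : Design I) : ∑ x ∈ ξ.supp, ξ.w x = 1 := by
  simpa [ξ.w_sum] using ξ.sum_supp_smul fun _ => (1 : ℝ)

theorem supp_nonempty (ξ : Design I) : ξ.supp.Nonempty :=
  nonempty_of_sum_ne_zero (by rw [ξ.sum_supp_w]; exact one_ne_zero)

theorem sum_mass_smul {E : Type*} [AddCommMonoid E] [Module ℝ E] (ξ : Design I)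
    {T : Finset ℝ} (hT : ξ.supp ⊆ T) (F : ℝ → E) :
    ∑ x ∈ T, ξ.mass x • F x = ∑ x ∈ ξ.pts, ξ.w x • F x := by
  rw [← sum_subset hT fun x _ h => by rw [ξ.mass_eq_zero_of_notMem_supp h, zero_smul],
    ← ξ.sum_supp_smul]
  exact sum_congr rfl fun x hx => by rw [mass, if_pos (ξ.supp_subset_pts hx)]

theorem integral_one (ξ : Design I) : ξ.integral (fun _ => 1) = 1 := by
  simp [integral, ξ.w_sum]

theorem integral_eq_sum_mass (ξ : Design I) {T : Finset ℝ} (hT : ξ.supp ⊆ T) (g : ℝ → ℝ) :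
    ξ.integral g = ∑ x ∈ T, ξ.mass x * g x :=
  (ξ.sum_mass_smul hT g).symm

theorem sum_mass_sub_mul_eq_zero {ξ : Design I} {η : Design J}
    {g : ℝ → ℝ} (h : ξ.integral g = η.integral g) :
    ∑ x ∈ ξ.supp ∪ η.supp, (ξ.mass x - η.mass x) * g x = 0 := by
  simp only [sub_mul, sum_sub_distrib]
  rw [← ξ.integral_eq_sum_mass subset_union_left, ← η.integral_eq_sum_mass subset_union_right, h,
    sub_self]

def lift (ξ : Design I) (h : I ⊆ J) : Design J :=
  { ξ with mem_pts := fun x hx => h (ξ.mem_pts x hx) }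

noncomputable def restrict (ξ : Design I) (h : ∀ x ∈ ξ.supp, x ∈ J) : Design J where
  pts := ξ.supp
  w := ξ.w
  mem_pts := h
  w_nonneg x hx := ξ.w_nonneg x (ξ.supp_subset_pts hx)
  w_sum := ξ.sum_supp_w

theorem infoMat_restrict {d : ℕ} (M : ℝ → Matrix (Fin d) (Fin d) ℝ) (ξ : Design I)
    (h : ∀ x ∈ ξ.supp, x ∈ J) : infoMat M (ξ.restrict h) = infoMat M ξ :=
  ξ.sum_supp_smul M

theorem sameMeasure_restrict (ξ : Design I) (h : ∀ x ∈ ξ.supp, x ∈ J) :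
    sameMeasure (ξ.restrict h) ξ :=
  ξ.sum_supp_smul

noncomputable def mix (ξ η : Design I) (t : ℝ) (ht : t ∈ Set.Icc 0 1) : Design I where
  pts := ξ.pts ∪ η.pts
  w x := t * ξ.mass x + (1 - t) * η.mass x
  mem_pts x hx := (mem_union.1 hx).elim (ξ.mem_pts x) (η.mem_pts x)
  w_nonneg x _ := add_nonneg (mul_nonneg ht.1 (ξ.mass_nonneg x))
    (mul_nonneg (sub_nonneg.2 ht.2) (η.mass_nonneg x))
  w_sum := by
    have hξ := ξ.sum_mass_smul (T := ξ.pts ∪ η.pts) (ξ.supp_subset_pts.trans subset_union_left)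
      fun _ => (1 : ℝ)
    have hη := η.sum_mass_smul (T := ξ.pts ∪ η.pts) (η.supp_subset_pts.trans subset_union_right)
      fun _ => (1 : ℝ)
    simp only [smul_eq_mul, mul_one, ξ.w_sum, η.w_sum] at hξ hη
    rw [sum_add_distrib, ← mul_sum, ← mul_sum, hξ, hη]
    ring

theorem sum_mix_smul {E : Type*} [AddCommGroup E] [Module ℝ E] (ξ η : Design I) (t : ℝ)
    (ht : t ∈ Set.Icc 0 1) (F : ℝ → E) :
    ∑ x ∈ (ξ.mix η t ht).pts, (ξ.mix η t ht).w x • F x =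
      t • ∑ x ∈ ξ.pts, ξ.w x • F x + (1 - t) • ∑ x ∈ η.pts, η.w x • F x := by
  simp only [mix, add_smul, mul_smul, sum_add_distrib, ← smul_sum]
  rw [ξ.sum_mass_smul (ξ.supp_subset_pts.trans subset_union_left),
    η.sum_mass_smul (η.supp_subset_pts.trans subset_union_right)]

theorem integral_mix (ξ η : Design I) (t : ℝ) (ht : t ∈ Set.Icc 0 1) (g : ℝ → ℝ) :
    (ξ.mix η t ht).integral g = t * ξ.integral g + (1 - t) * η.integral g :=
  ξ.sum_mix_smul η t ht g

theorem infoMat_mix {d : ℕ} (M : ℝ → Matrix (Fin d) (Fin d) ℝ) (ξ η : Design I) (t : ℝ)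
    (ht : t ∈ Set.Icc 0 1) :
    infoMat M (ξ.mix η t ht) = t • infoMat M ξ + (1 - t) • infoMat M η :=
  ξ.sum_mix_smul η t ht M

noncomputable def ofFamily {ι : Type*} [Fintype ι] (p v : ι → ℝ) (hp : ∀ j, p j ∈ I)
    (hv : ∀ j, 0 ≤ v j) (hsum : ∑ j, v j = 1) : Design I where
  pts := univ.image p
  w x := ∑ j with p j = x, v j
  mem_pts x hx := by
    obtain ⟨j, -, rfl⟩ := mem_image.1 hx
    exact hp j
  w_nonneg x _ := sum_nonneg fun j _ => hv j
  w_sum := by rw [sum_fiberwise_of_maps_to fun j _ => mem_image_of_mem p (mem_univ j), hsum]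

theorem integral_ofFamily {ι : Type*} [Fintype ι] (p v : ι → ℝ) (hp : ∀ j, p j ∈ I)
    (hv : ∀ j, 0 ≤ v j) (hsum : ∑ j, v j = 1) (g : ℝ → ℝ) :
    (ofFamily p v hp hv hsum).integral g = ∑ j, v j * g (p j) := by
  simp only [integral, ofFamily, sum_mul]
  rw [← sum_fiberwise_of_maps_to fun j _ => mem_image_of_mem p (mem_univ j)]
  exact sum_congr rfl fun x _ => sum_congr rfl fun j hj => by rw [(mem_filter.1 hj).2]

theorem exists_family (ξ : Design I) {m : ℕ} (hm : ξ.pts.card ≤ m) :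
    ∃ p v : Fin m → ℝ, (∀ j, p j ∈ ξ.pts) ∧ (∀ x ∈ ξ.pts, ∃ j, p j = x) ∧
      (∀ j, v j ∈ Set.Icc 0 1) ∧ ∀ g, ∑ j, v j * g (p j) = ξ.integral g := by
  obtain ⟨x₀, hx₀⟩ := ξ.pts_nonempty
  obtain ⟨ι⟩ := Function.Embedding.nonempty_of_card_le (α := ξ.pts) (β := Fin m)
    (by simpa using hm)
  set p := Function.extend ι Subtype.val fun _ => x₀
  set v := Function.extend ι (fun x => ξ.w x) 0
  have hp (x : ξ.pts) : p (ι x) = x := ι.injective.extend_apply _ _ x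
  have hv (x : ξ.pts) : v (ι x) = ξ.w x := ι.injective.extend_apply _ _ x
  have hp₀ (j : Fin m) (hj : ¬∃ x, ι x = j) : p j = x₀ := Function.extend_apply' _ _ j hj
  have hv₀ (j : Fin m) (hj : ¬∃ x, ι x = j) : v j = 0 := Function.extend_apply' _ _ j hj
  refine ⟨p, v, fun j => ?_, fun x hx => ⟨ι ⟨x, hx⟩, hp _⟩, fun j => ?_, fun g => ?_⟩
  · by_cases hj : ∃ x, ι x = j
    · obtain ⟨x, rfl⟩ := hj
      exact hp x ▸ x.2
    · rwa [hp₀ j hj]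
  · by_cases hj : ∃ x, ι x = j
    · obtain ⟨x, rfl⟩ := hj
      rw [hv]
      exact ⟨ξ.w_nonneg x x.2, ξ.w_le_one x.2⟩
    · rw [hv₀ j hj]
      exact ⟨le_rfl, zero_le_one⟩
  · calc ∑ j, v j * g (p j) = ∑ j ∈ univ.map ι, v j * g (p j) :=
          (sum_subset (subset_univ _) fun j _ hj => by
            rw [hv₀ j (by simpa using hj), zero_mul]).symm
      _ = ∑ x : ξ.pts, ξ.w x * g x := by simp only [sum_map, hv, hp]
      _ = ξ.integral g := sum_coe_sort ξ.pts fun x => ξ.w x * g x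

theorem exists_subseq_tendsto_integral {K : Set ℝ} (hK : IsCompact K) {m : ℕ}
    (ξ : ℕ → Design K) (hcard : ∀ k, (ξ k).pts.card ≤ m) :
    ∃ ν : Design K, ∃ φ : ℕ → ℕ, StrictMono φ ∧ ν.pts.card ≤ m ∧
      (∀ g, ContinuousOn g K → Tendsto (fun k => (ξ (φ k)).integral g) atTop (𝓝 (ν.integral g))) ∧
      ∀ F : Set ℝ, IsClosed F → (∀ k, ∃ x ∈ (ξ k).pts, x ∈ F) → ∃ x ∈ ν.pts, x ∈ F := by
  choose p v hp hsurj hv hint using fun k => (ξ k).exists_family (hcard k)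
  have hmem (k : ℕ) : (fun j => (p k j, v k j)) ∈ Set.univ.pi fun _ : Fin m => K ×ˢ Set.Icc 0 1 :=
    fun j _ => ⟨(ξ k).mem_pts _ (hp k j), hv k j⟩
  obtain ⟨z, hz, φ, hφ, hlim⟩ :=
    (isCompact_univ_pi fun _ => hK.prod isCompact_Icc).tendsto_subseq hmem
  have hplim (j : Fin m) : Tendsto (fun k => p (φ k) j) atTop (𝓝 (z j).1) :=
    (continuous_fst.tendsto _).comp (tendsto_pi_nhds.1 hlim j)
  have hvlim (j : Fin m) : Tendsto (fun k => v (φ k) j) atTop (𝓝 (z j).2) :=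
    (continuous_snd.tendsto _).comp (tendsto_pi_nhds.1 hlim j)
  have hzK (j : Fin m) : (z j).1 ∈ K := (hz j trivial).1
  have hlim_int (g : ℝ → ℝ) (hg : ContinuousOn g K) :
      Tendsto (fun k => (ξ (φ k)).integral g) atTop (𝓝 (∑ j, (z j).2 * g (z j).1)) := by
    simp only [← hint]
    refine tendsto_finsetSum _ fun j _ => (hvlim j).mul <| (hg _ (hzK j)).tendsto.comp ?_
    exact tendsto_nhdsWithin_iff.2 ⟨hplim j, .of_forall fun k => (ξ _).mem_pts _ (hp _ j)⟩
  have hsum : ∑ j, (z j).2 = 1 := by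
    have h1 := hlim_int (fun _ => 1) continuousOn_const
    simp only [integral_one, mul_one] at h1
    exact (tendsto_nhds_unique tendsto_const_nhds h1).symm
  refine ⟨ofFamily (fun j => (z j).1) (fun j => (z j).2) hzK (fun j => (hz j trivial).2.1)
    hsum, φ, hφ, card_image_le.trans (by simp), fun g hg => ?_, fun F hF hξF => ?_⟩
  · rw [integral_ofFamily]
    exact hlim_int g hg
  · choose x hx hxF using hξF
    choose s hs using fun k => hsurj k (x k) (hx k)
    obtain ⟨j, hj⟩ : ∃ j, ∃ᶠ k in atTop, s (φ k) = j :=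
      frequently_exists.1 (.of_forall fun k => ⟨_, rfl⟩)
    refine ⟨(z j).1, mem_image_of_mem _ (mem_univ j),
      hF.mem_of_frequently_of_tendsto (hj.mono fun k hk => ?_) (hplim j)⟩
    rw [← hk, hs]
    exact hxF _

end Design

section SameMeasure

variable {I J K : Set ℝ} {ξ : Design I} {η : Design J}

theorem sameMeasure.mass_eq (h : sameMeasure ξ η) (x : ℝ) : ξ.mass x = η.mass x := by
  simpa [Design.mass] using h fun y => if y = x then 1 else 0

theorem sameMeasure.symm (h : sameMeasure ξ η) : sameMeasure η ξ :=
  fun g => (h g).symm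

theorem sameMeasure.trans {ζ : Design K} (h : sameMeasure ξ η) (h' : sameMeasure η ζ) :
    sameMeasure ξ ζ :=
  fun g => (h g).trans (h' g)

theorem sameMeasure.supp_eq (h : sameMeasure ξ η) : ξ.supp = η.supp := by
  ext x
  rw [← ξ.mass_pos_iff, ← η.mass_pos_iff, h.mass_eq]

theorem sameMeasure.supp_eq_pts (h : sameMeasure ξ η) (hcard : η.pts.card ≤ ξ.supp.card) :
    ξ.supp = η.pts :=
  h.supp_eq ▸ eq_of_subset_of_card_le η.supp_subset_pts (h.supp_eq ▸ hcard)

theorem sameMeasure_of_mass_eq (h : ∀ x ∈ ξ.supp ∪ η.supp, ξ.mass x = η.mass x) :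
    sameMeasure ξ η := fun g => by
  change ξ.integral g = η.integral g
  rw [ξ.integral_eq_sum_mass subset_union_left, η.integral_eq_sum_mass subset_union_right]
  exact sum_congr rfl fun x hx => by rw [h x hx]

end SameMeasure

theorem infoMat_posSemidef {d : ℕ} {M : ℝ → Matrix (Fin d) (Fin d) ℝ} {I : Set ℝ}
    (hM : ∀ x ∈ I, (M x).PosSemidef) (ξ : Design I) : (infoMat M ξ).PosSemidef :=
  Matrix.posSemidef_sum _ fun x hx => (hM x (ξ.mem_pts x hx)).smul (ξ.w_nonneg x hx)

theorem Set.Infinite.exists_finset_superset_card_eq {α : Type*} {T : Set α} (hT : T.Infinite)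
    {S : Finset α} (hST : ↑S ⊆ T) {n : ℕ} (hS : S.card ≤ n) :
    ∃ S' : Finset α, S ⊆ S' ∧ ↑S' ⊆ T ∧ S'.card = n := by
  obtain ⟨S', hSS', hS'T, hS'⟩ :=
    hT.exists_superset_ncard_eq (k := n) hST S.finite_toSet (by rwa [Set.ncard_coe_finset])
  rcases n.eq_zero_or_pos with rfl | hn
  · exact ⟨S, subset_rfl, hST, by omega⟩
  · have hfin : S'.Finite := Set.finite_of_ncard_pos (hS' ▸ hn)
    exact ⟨hfin.toFinset, by simpa using hSS', by simpa using hS'T,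
      by rw [← Set.ncard_eq_toFinset_card S' hfin, hS']⟩

-- Laplace expansion along the first column of `A` with its column `k` prepended.
theorem Matrix.vecMul_alternatingMinors_eq_zero {R : Type*} [CommRing R] {n : ℕ}
    (A : Matrix (Fin (n + 1)) (Fin n) R) :
    (fun i : Fin (n + 1) => (-1) ^ (i : ℕ) * (A.submatrix i.succAbove id).det) ᵥ* A = 0 := by
  ext k
  let B : Matrix (Fin (n + 1)) (Fin (n + 1)) R := Matrix.of fun i => Fin.cons (A i k) (A i)
  have hB : B.det = 0 := Matrix.det_zero_of_column_eq (Fin.succ_ne_zero k).symm fun i => by simp [B]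
  rw [Matrix.det_succ_column_zero] at hB
  simpa [Matrix.vecMul, dotProduct, B, Matrix.submatrix, mul_right_comm] using hB

theorem Matrix.smul_eq_smul_of_vecMul_eq_zero {R : Type*} [CommRing R] [NoZeroDivisors R]
    {n : ℕ} {A : Matrix (Fin (n + 1)) (Fin n) R} (hA : (A.submatrix Fin.succ id).det ≠ 0)
    {c d : Fin (n + 1) → R} (hc : c ᵥ* A = 0) (hd : d ᵥ* A = 0) : d 0 • c = c 0 • d := by
  set e := d 0 • c - c 0 • d
  have he : e ᵥ* A = 0 := by simp [e, Matrix.sub_vecMul, Matrix.smul_vecMul, hc, hd]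
  have he0 : e 0 = 0 := by simp [e, mul_comm]
  have htail : Fin.tail e ᵥ* A.submatrix Fin.succ id = 0 := by
    ext k
    have := congrFun he k
    simp only [Matrix.vecMul, dotProduct, Fin.sum_univ_succ, he0, zero_mul, zero_add] at this
    simpa [Matrix.vecMul, dotProduct, Fin.tail] using this
  have := Matrix.eq_zero_of_vecMul_eq_zero hA htail
  exact sub_eq_zero.1 <| funext fun j => Fin.cases he0 (fun i => congrFun this i) j

theorem Finset.sum_orderEmbOfFin {α M : Type*} [LinearOrder α] [AddCommMonoid M] (s : Finset α)
    {k : ℕ} (h : s.card = k) (f : α → M) : ∑ i, f (s.orderEmbOfFin h i) = ∑ x ∈ s, f x := by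
  conv_rhs => rw [← s.map_orderEmbOfFin_univ h, sum_map]
  rfl

section Chebyshev

variable {n : ℕ} {g : Fin n → ℝ → ℝ} {T : Set ℝ}

theorem IsChebyshev.eq_zero_of_sum_mul_eq_zero (hg : IsChebyshev g T) (hT : T.Infinite)
    {S : Finset ℝ} (hST : ↑S ⊆ T) (hS : S.card ≤ n) {δ : ℝ → ℝ}
    (hδ : ∀ ℓ, ∑ x ∈ S, δ x * g ℓ x = 0) : ∀ x ∈ S, δ x = 0 := by
  obtain ⟨S', hSS', hS'T, hS'⟩ := hT.exists_finset_superset_card_eq hST hS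
  set t := S'.orderEmbOfFin hS'
  set δ' : ℝ → ℝ := fun x => if x ∈ S then δ x else 0
  have hsum (ℓ : Fin n) : ∑ i, δ' (t i) * g ℓ (t i) = 0 := by
    rw [S'.sum_orderEmbOfFin hS' fun x => δ' x * g ℓ x,
      ← sum_subset hSS' fun x _ hx => by simp [δ', hx], ← hδ ℓ]
    exact sum_congr rfl fun x hx => by simp [δ', hx]
  have hzero : (fun i => δ' (t i)) = 0 :=
    Matrix.eq_zero_of_vecMul_eq_zero (hg t t.strictMono fun i => hS'T (S'.orderEmbOfFin_mem hS' i))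
      (funext hsum)
  intro x hx
  obtain ⟨i, hi⟩ : x ∈ Set.range t := by rw [S'.range_orderEmbOfFin hS']; exact hSS' hx
  simpa [δ', hx, hi] using congrFun hzero i

theorem IsChebyshev.sameMeasure_of_integral_eq (hg : IsChebyshev g T) (hT : T.Infinite)
    (ξ η : Design T) (hcard : (ξ.supp ∪ η.supp).card ≤ n)
    (hmom : ∀ ℓ, ξ.integral (g ℓ) = η.integral (g ℓ)) : sameMeasure ξ η :=
  sameMeasure_of_mass_eq fun x hx => sub_eq_zero.1 <|
    hg.eq_zero_of_sum_mul_eq_zero hT (ξ.coe_supp_union_subset η) hcard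
      (fun ℓ => Design.sum_mass_sub_mul_eq_zero (hmom ℓ)) x hx

theorem IsChebyshev.det_mul_det_pos (hg : IsChebyshev g T) (hT : Convex ℝ T)
    (hgc : ∀ ℓ, ContinuousOn (g ℓ) T) {a b : Fin n → ℝ} (ha : StrictMono a) (hb : StrictMono b)
    (haT : ∀ i, a i ∈ T) (hbT : ∀ i, b i ∈ T) :
    0 < (Matrix.of fun i j => g j (a i)).det * (Matrix.of fun i j => g j (b i)).det := by
  set C := {t : Fin n → ℝ | StrictMono t ∧ ∀ i, t i ∈ T}
  have hC : Convex ℝ C := by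
    intro s hs t ht α β hα hβ hαβ
    refine ⟨fun i j hij => ?_, fun i => hT (hs.2 i) (ht.2 i) hα hβ hαβ⟩
    simp only [Pi.add_apply, Pi.smul_apply, smul_eq_mul]
    rcases hα.eq_or_lt with rfl | hα
    · simpa [show β = 1 by linarith] using ht.1 hij
    · nlinarith [mul_lt_mul_of_pos_left (hs.1 hij) hα, mul_le_mul_of_nonneg_left (ht.1 hij).le hβ]
  set f : (Fin n → ℝ) → ℝ := fun t => (Matrix.of fun i j => g j (t i)).det
  have hf : ContinuousOn f C := by
    refine (continuous_id.matrix_det).comp_continuousOn <| continuousOn_pi.2 fun i =>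
      continuousOn_pi.2 fun j => (hgc j).comp (continuous_apply i).continuousOn fun t ht => ht.2 i
  have hf0 : ∀ t ∈ C, f t ≠ 0 := fun t ht => hg t ht.1 ht.2
  by_contra h
  rcases mul_nonpos_iff.1 (not_lt.1 h) with ⟨h1, h2⟩ | ⟨h1, h2⟩
  · obtain ⟨t, ht, h0⟩ := hC.isPreconnected.intermediate_value ⟨hb, hbT⟩ ⟨ha, haT⟩ hf ⟨h2, h1⟩
    exact hf0 t ht h0
  · obtain ⟨t, ht, h0⟩ := hC.isPreconnected.intermediate_value ⟨ha, haT⟩ ⟨hb, hbT⟩ hf ⟨h1, h2⟩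
    exact hf0 t ht h0

-- `c` is proportional to `(-1) ^ j * D j`, and `D 0`, `D (Fin.last n)` have the same sign.
theorem IsChebyshev.last_neg_of_vecMul_eq_zero (hg : IsChebyshev g T) (hT : Convex ℝ T)
    (hgc : ∀ ℓ, ContinuousOn (g ℓ) T) (hn : Odd n) {χ : Fin (n + 1) → ℝ} (hχ : StrictMono χ)
    (hχT : ∀ j, χ j ∈ T) {c : Fin (n + 1) → ℝ} (hc : c ᵥ* Matrix.of (fun i j => g j (χ i)) = 0)
    (hc0 : 0 < c 0) : c (Fin.last n) < 0 := by
  set A := Matrix.of fun i j => g j (χ i)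
  set D : Fin (n + 1) → ℝ := fun j => (A.submatrix j.succAbove id).det
  have hD (j : Fin (n + 1)) : D j ≠ 0 :=
    hg _ (hχ.comp (Fin.strictMono_succAbove j)) fun i => hχT _
  have hrel := congrFun (Matrix.smul_eq_smul_of_vecMul_eq_zero (by simpa [D] using hD 0) hc
    (Matrix.vecMul_alternatingMinors_eq_zero A)) (Fin.last n)
  simp only [Pi.smul_apply, smul_eq_mul, Fin.val_zero, pow_zero, one_mul, Fin.val_last,
    hn.neg_one_pow] at hrel
  change D 0 * c (Fin.last n) = c 0 * (-1 * D (Fin.last n)) at hrel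
  have hpos : 0 < D 0 * D (Fin.last n) :=
    hg.det_mul_det_pos hT hgc (hχ.comp (Fin.strictMono_succAbove 0))
      (hχ.comp (Fin.strictMono_succAbove _)) (fun i => hχT _) fun i => hχT _
  have hsq : D 0 * D 0 * c (Fin.last n) = -(c 0 * (D 0 * D (Fin.last n))) := by
    linear_combination D 0 * hrel
  by_contra h
  nlinarith [mul_nonneg (mul_self_nonneg (D 0)) (not_lt.1 h), mul_pos hc0 hpos]

theorem IsChebyshev.max_mem_supp_of_min_mem_supp (hg : IsChebyshev g T) (hT : Convex ℝ T)
    (hgc : ∀ ℓ, ContinuousOn (g ℓ) T) (hn : Odd n) (ξ η : Design T)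
    (hcard : (ξ.supp ∪ η.supp).card = n + 1) (hmom : ∀ ℓ, ξ.integral (g ℓ) = η.integral (g ℓ))
    {a : ℝ} (ha : a ∈ ξ.supp) (haη : a ∉ η.supp) (hmin : ∀ y ∈ ξ.supp ∪ η.supp, a ≤ y) :
    ∃ b ∈ η.supp, ∀ y ∈ ξ.supp ∪ η.supp, y ≤ b := by
  set S := ξ.supp ∪ η.supp
  set χ := S.orderEmbOfFin hcard
  set c : Fin (n + 1) → ℝ := fun j => ξ.mass (χ j) - η.mass (χ j)
  have hc : c ᵥ* Matrix.of (fun i j => g j (χ i)) = 0 := by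
    ext ℓ
    simp only [Matrix.vecMul, dotProduct, Matrix.of_apply, Pi.zero_apply]
    rw [S.sum_orderEmbOfFin hcard fun x => (ξ.mass x - η.mass x) * g ℓ x]
    exact Design.sum_mass_sub_mul_eq_zero (hmom ℓ)
  have hχ0 : χ 0 = a := by
    rw [show χ 0 = S.min' _ from S.orderEmbOfFin_zero hcard n.succ_pos]
    exact le_antisymm (S.min'_le a (mem_union_left _ ha)) (S.le_min' _ a hmin)
  have hc0 : 0 < c 0 := by
    simp only [c, hχ0, η.mass_eq_zero_of_notMem_supp haη, sub_zero, ξ.mass_pos_iff, ha]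
  have hlast := hg.last_neg_of_vecMul_eq_zero hT hgc hn χ.strictMono
    (fun j => ξ.coe_supp_union_subset η (S.orderEmbOfFin_mem hcard j)) hc hc0
  refine ⟨χ (Fin.last n), η.mass_pos_iff.1 (by linarith [ξ.mass_nonneg (χ (Fin.last n))]),
    fun y hy => ?_⟩
  rw [show χ (Fin.last n) = S.max' _ from S.orderEmbOfFin_last hcard n.succ_pos]
  exact S.le_max' y hy

end Chebyshev

section Optimality

variable {d : ℕ} {Φ : Matrix (Fin d) (Fin d) ℝ → ℝ} {M : ℝ → Matrix (Fin d) (Fin d) ℝ}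

def IsOptimal (Φ : Matrix (Fin d) (Fin d) ℝ → ℝ) (M : ℝ → Matrix (Fin d) (Fin d) ℝ) {I : Set ℝ}
    (ξ : Design I) : Prop :=
  ∀ η : Design I, Φ (infoMat M η) ≤ Φ (infoMat M ξ)

def IsUniqueOptimal (Φ : Matrix (Fin d) (Fin d) ℝ → ℝ) (M : ℝ → Matrix (Fin d) (Fin d) ℝ)
    {I : Set ℝ} (ξ : Design I) : Prop :=
  IsOptimal Φ M ξ ∧ ∀ η : Design I, IsOptimal Φ M η → sameMeasure η ξ

def HasCompleteClass {n : ℕ} (M : ℝ → Matrix (Fin d) (Fin d) ℝ) (Ψ : Fin n → ℝ → ℝ) (I : Set ℝ)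
    (m : ℕ) (L : ℝ) : Prop :=
  ∀ ξ : Design I, ∃ ξ' : Design I, ξ'.pts.card ≤ m ∧ L ∈ ξ'.pts ∧
    (∀ ℓ, ξ'.integral (Ψ ℓ) = ξ.integral (Ψ ℓ)) ∧ (infoMat M ξ' - infoMat M ξ).PosSemidef

theorem IsOptCriterion.apply_lt_apply_smul_add_smul (hΦ : IsOptCriterion Φ)
    {A B : Matrix (Fin d) (Fin d) ℝ} (hA : A.PosSemidef) (hB : B.PosSemidef) (hlt : Φ B < Φ A)
    {t : ℝ} (ht : t ∈ Set.Ioo 0 1) : Φ B < Φ (t • A + (1 - t) • B) := by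
  nlinarith [hΦ.concave A B hA hB t ht.1 ht.2, mul_lt_mul_of_pos_left hlt ht.1]

theorem IsOptimal.restrict {I J : Set ℝ} (hIJ : I ⊆ J) {ξ : Design J} (hξ : IsOptimal Φ M ξ)
    (h : ∀ x ∈ ξ.supp, x ∈ I) : IsOptimal Φ M (ξ.restrict h) := fun η => by
  rw [Design.infoMat_restrict]
  exact hξ (η.lift hIJ)

theorem IsOptimal.exists_mem_supp_notMem {I J : Set ℝ} {ξ : Design I} (hξ : IsOptimal Φ M ξ)
    {η : Design J} (hlt : Φ (infoMat M ξ) < Φ (infoMat M η)) : ∃ x ∈ η.supp, x ∉ I := by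
  by_contra! h
  exact (hξ (η.restrict h)).not_gt (by rwa [Design.infoMat_restrict])

end Optimality

section Subregion

variable {d m : ℕ} {M : ℝ → Matrix (Fin d) (Fin d) ℝ} {Ψ : Fin (2 * m - 1) → ℝ → ℝ}
  {Φ : Matrix (Fin d) (Fin d) ℝ → ℝ} {L B U : ℝ}

theorem left_mem_supp_of_isUniqueOptimal (hLB : L < B) (hUB : U ≤ B)
    (hM : ∀ x ∈ Set.Icc L B, (M x).PosSemidef) (hΨ : ∀ ℓ, ContinuousOn (Ψ ℓ) (Set.Icc L B))
    (hCheb : IsChebyshev Ψ (Set.Icc L B)) (hC : HasCompleteClass M Ψ (Set.Icc L B) m L)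
    (hΦ : IsOptCriterion Φ) {ξU : Design (Set.Icc L U)} (hξU : IsUniqueOptimal Φ M ξU)
    (hcard : ξU.supp.card = m) : L ∈ ξU.supp := by
  have hsub : Set.Icc L U ⊆ Set.Icc L B := Set.Icc_subset_Icc_right hUB
  obtain ⟨ξ', hcard', hL, hmom, hdom⟩ := hC (ξU.lift hsub)
  by_cases hS : (ξ'.supp ∪ ξU.supp).card ≤ 2 * m - 1
  · have hsm := hCheb.sameMeasure_of_integral_eq (Set.Icc_infinite hLB) ξ' (ξU.lift hsub) hS hmom
    exact (hsm.symm.supp_eq_pts (hcard ▸ hcard')).symm ▸ hL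
  -- Otherwise the two supports are disjoint, with `m` points each.
  have hm := ξU.supp_nonempty.card_pos
  have hunion := card_union_add_card_inter ξ'.supp ξU.supp
  have hsupp' := card_le_card ξ'.supp_subset_pts
  have hL' : L ∈ ξ'.supp := (eq_of_subset_of_card_le ξ'.supp_subset_pts (by omega)) ▸ hL
  have hLU : L ∉ ξU.supp := fun h =>
    (card_pos.2 ⟨L, mem_inter.2 ⟨hL', h⟩⟩).ne' (by omega)
  obtain ⟨b, hb, hbmax⟩ := hCheb.max_mem_supp_of_min_mem_supp (convex_Icc L B) hΨ (n := 2 * m - 1)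
    ⟨m - 1, by omega⟩ ξ' (ξU.lift hsub) (by change (ξ'.supp ∪ ξU.supp).card = _; omega) hmom hL'
    hLU fun y hy => (ξ'.coe_supp_union_subset (ξU.lift hsub) hy).1
  have hξ'U : ∀ x ∈ ξ'.supp, x ∈ Set.Icc L U := fun x hx =>
    ⟨(ξ'.mem_of_mem_supp hx).1, (hbmax x (mem_union_left _ hx)).trans (ξU.mem_of_mem_supp hb).2⟩
  have hopt : IsOptimal Φ M (ξ'.restrict hξ'U) := fun η => by
    rw [Design.infoMat_restrict]
    exact (hξU.1 η).trans (hΦ.isotonic _ _ (infoMat_posSemidef hM (ξU.lift hsub)) hdom)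
  exact absurd (((ξ'.sameMeasure_restrict hξ'U).symm.trans (hξU.2 _ hopt)).supp_eq ▸ hL') hLU

theorem sameMeasure_of_isOptimal_of_supp_le (hUB : U ≤ B) {ξstar : Design (Set.Icc L B)}
    (hstar : IsOptimal Φ M ξstar) {ξU : Design (Set.Icc L U)} (hξU : IsUniqueOptimal Φ M ξU)
    (hle : ∀ y ∈ ξstar.supp, y ≤ U) : sameMeasure ξU ξstar := by
  have h : ∀ x ∈ ξstar.supp, x ∈ Set.Icc L U := fun x hx =>
    ⟨(ξstar.mem_of_mem_supp hx).1, hle x hx⟩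
  exact (hξU.2 _ (hstar.restrict (Set.Icc_subset_Icc_right hUB) h)).symm.trans
    (ξstar.sameMeasure_restrict h)

theorem exists_reduction_of_mix (hUB : U ≤ B) (hM : ∀ x ∈ Set.Icc L B, (M x).PosSemidef)
    (hC : HasCompleteClass M Ψ (Set.Icc L B) m L) (hΦ : IsOptCriterion Φ)
    {ξstar : Design (Set.Icc L B)} {ξU : Design (Set.Icc L U)} (hξU : IsOptimal Φ M ξU)
    (hgap : Φ (infoMat M ξU) < Φ (infoMat M ξstar)) {t : ℝ} (ht : t ∈ Set.Ioo 0 1) :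
    ∃ ξ' : Design (Set.Icc L B), ξ'.pts.card ≤ m ∧ L ∈ ξ'.pts ∧
      (∀ ℓ, ξ'.integral (Ψ ℓ) = t * ξstar.integral (Ψ ℓ) + (1 - t) * ξU.integral (Ψ ℓ)) ∧
      ∃ x ∈ ξ'.pts, U < x := by
  have hsub : Set.Icc L U ⊆ Set.Icc L B := Set.Icc_subset_Icc_right hUB
  have ht' := Set.Ioo_subset_Icc_self ht
  obtain ⟨ξ', hcard', hL', hmom, hdom⟩ := hC (ξstar.mix (ξU.lift hsub) t ht')
  refine ⟨ξ', hcard', hL', fun ℓ => (hmom ℓ).trans (Design.integral_mix ..), ?_⟩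
  have hbetter : Φ (infoMat M ξU) < Φ (infoMat M ξ') := by
    refine (hΦ.apply_lt_apply_smul_add_smul (infoMat_posSemidef hM ξstar)
      (infoMat_posSemidef hM (ξU.lift hsub)) hgap ht).trans_le ?_
    rw [← Design.infoMat_mix M ξstar (ξU.lift hsub) t ht']
    exact hΦ.isotonic _ _ (infoMat_posSemidef hM _) hdom
  obtain ⟨x, hx, hxU⟩ := hξU.exists_mem_supp_notMem hbetter
  exact ⟨x, ξ'.supp_subset_pts hx, not_le.1 fun h => hxU ⟨(ξ'.mem_of_mem_supp hx).1, h⟩⟩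

theorem exists_limit_of_reductions (hΨ : ∀ ℓ, ContinuousOn (Ψ ℓ) (Set.Icc L B))
    {ξstar ξU : Design (Set.Icc L B)}
    (h : ∀ t ∈ Set.Ioo (0 : ℝ) 1, ∃ ξ' : Design (Set.Icc L B), ξ'.pts.card ≤ m ∧ L ∈ ξ'.pts ∧
      (∀ ℓ, ξ'.integral (Ψ ℓ) = t * ξstar.integral (Ψ ℓ) + (1 - t) * ξU.integral (Ψ ℓ)) ∧
      ∃ x ∈ ξ'.pts, U < x) :
    ∃ ν : Design (Set.Icc L B), ν.pts.card ≤ m ∧ L ∈ ν.pts ∧ (∃ x ∈ ν.pts, U ≤ x) ∧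
      ∀ ℓ, ξU.integral (Ψ ℓ) = ν.integral (Ψ ℓ) := by
  set t : ℕ → ℝ := fun k => 1 / ((k + 1 : ℕ) + 1)
  have ht (k : ℕ) : t k ∈ Set.Ioo 0 1 := ⟨by positivity, by
    rw [div_lt_one (by positivity)]; push_cast; linarith [(k.cast_nonneg : (0 : ℝ) ≤ k)]⟩
  have ht0 : Tendsto t atTop (𝓝 0) :=
    tendsto_one_div_add_atTop_nhds_zero_nat.comp (tendsto_add_atTop_nat 1)
  choose ξ' hcard hL hmom hbeyond using fun k => h (t k) (ht k)
  obtain ⟨ν, φ, hφ, hνcard, hνint, hνF⟩ :=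
    Design.exists_subseq_tendsto_integral isCompact_Icc ξ' hcard
  obtain ⟨y, hy, hyL⟩ := hνF {L} isClosed_singleton fun k => ⟨L, hL k, rfl⟩
  refine ⟨ν, hνcard, hyL ▸ hy, hνF (Set.Ici U) isClosed_Ici fun k => ?_, fun ℓ => ?_⟩
  · obtain ⟨x, hx, hUx⟩ := hbeyond k
    exact ⟨x, hx, hUx.le⟩
  refine tendsto_nhds_unique ?_ (hνint _ (hΨ ℓ))
  simp only [hmom]
  have htφ := ht0.comp hφ.tendsto_atTop
  simpa using (htφ.mul_const (ξstar.integral (Ψ ℓ))).add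
    (((tendsto_const_nhds (x := (1 : ℝ))).sub htφ).mul_const (ξU.integral (Ψ ℓ)))

theorem right_mem_supp_of_lt (hLB : L < B) (hUB : U ≤ B)
    (hM : ∀ x ∈ Set.Icc L B, (M x).PosSemidef) (hΨ : ∀ ℓ, ContinuousOn (Ψ ℓ) (Set.Icc L B))
    (hCheb : IsChebyshev Ψ (Set.Icc L B)) (hC : HasCompleteClass M Ψ (Set.Icc L B) m L)
    (hΦ : IsOptCriterion Φ) {ξstar : Design (Set.Icc L B)} (hstar : IsUniqueOptimal Φ M ξstar)
    {xmax : ℝ} (hxmax : xmax ∈ ξstar.supp) (hUx : U < xmax) {ξU : Design (Set.Icc L U)}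
    (hξU : IsOptimal Φ M ξU) (hL : L ∈ ξU.supp) (hcard : ξU.supp.card = m) : U ∈ ξU.supp := by
  by_contra hU
  have hsub : Set.Icc L U ⊆ Set.Icc L B := Set.Icc_subset_Icc_right hUB
  have hlt : ∀ x ∈ ξU.supp, x < U := fun x hx =>
    (ξU.mem_of_mem_supp hx).2.lt_of_ne fun h => hU (h ▸ hx)
  have hgap : Φ (infoMat M ξU) < Φ (infoMat M ξstar) := by
    refine (hstar.1 (ξU.lift hsub)).lt_of_ne fun heq => ?_
    have hsm := hstar.2 (ξU.lift hsub) fun η => (hstar.1 η).trans heq.ge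
    exact (hlt xmax (hsm.supp_eq ▸ hxmax)).not_gt hUx
  obtain ⟨ν, hνcard, hνL, ⟨x, hx, hUx⟩, hνmom⟩ := exists_limit_of_reductions hΨ
    (ξU := ξU.lift hsub) fun t ht => exists_reduction_of_mix hUB hM hC hΦ hξU hgap ht
  have hcardS : ((ξU.lift hsub).supp ∪ ν.supp).card ≤ 2 * m - 1 := by
    have h1 := card_le_card (union_subset_union_right ν.supp_subset_pts (s := ξU.supp))
    have h2 := card_union_add_card_inter ξU.supp ν.pts
    have h3 : 0 < (ξU.supp ∩ ν.pts).card := card_pos.2 ⟨L, mem_inter.2 ⟨hL, hνL⟩⟩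
    change (ξU.supp ∪ ν.supp).card ≤ _
    omega
  have hsm := hCheb.sameMeasure_of_integral_eq (Set.Icc_infinite hLB) _ _ hcardS hνmom
  exact (hlt x (hsm.supp_eq_pts (hcard ▸ hνcard) ▸ hx)).not_ge hUx

end Subregion

/-- relating the optimal design on a subregion `[L,U]` to the unique optimal
design `ξ**` on the full design region `[L,B]`, when the complete class fixes `L`. -/
theorem stmt7 {d m : ℕ} (L B : ℝ) (hLB : L < B)
    (M : ℝ → Matrix (Fin d) (Fin d) ℝ)
    (hMpsd : ∀ x ∈ Set.Icc L B, (M x).PosSemidef)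
    (Ψ : Fin (2 * m - 1) → ℝ → ℝ)
    (hΨsmooth : ∀ ℓ, ContDiffOn ℝ 1 (Ψ ℓ) (Set.Icc L B))
    (hCheb : IsChebyshev Ψ (Set.Icc L B))
    (hComplete : ∀ ξ : Design (Set.Icc L B), ∃ ξ' : Design (Set.Icc L B),
      ξ'.pts.card ≤ m ∧ L ∈ ξ'.pts ∧
      (∀ ℓ : Fin (2 * m - 1), ∑ y ∈ ξ'.pts, ξ'.w y * Ψ ℓ y = ∑ y ∈ ξ.pts, ξ.w y * Ψ ℓ y) ∧
      (infoMat M ξ' - infoMat M ξ).PosSemidef)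
    (Φ : Matrix (Fin d) (Fin d) ℝ → ℝ) (hΦ : IsOptCriterion Φ)
    -- ξ** : the unique Φ-optimal design on the full design region [L,B]
    (ξstar : Design (Set.Icc L B))
    (hOptFull : ∀ ξ : Design (Set.Icc L B), Φ (infoMat M ξ) ≤ Φ (infoMat M ξstar))
    (hUniqFull : ∀ ξ : Design (Set.Icc L B),
      (∀ η : Design (Set.Icc L B), Φ (infoMat M η) ≤ Φ (infoMat M ξ)) →
      sameMeasure ξ ξstar)
    (xmax : ℝ) (hxmaxMem : xmax ∈ ξstar.supp) (hxmaxMax : ∀ y ∈ ξstar.supp, y ≤ xmax)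
    -- the subregion [L,U] and the unique Φ-optimal design on it
    (U : ℝ) (hUB : U ≤ B)
    (ξU : Design (Set.Icc L U))
    (hOptU : ∀ ξ : Design (Set.Icc L U), Φ (infoMat M ξ) ≤ Φ (infoMat M ξU))
    (hUniqU : ∀ ξ : Design (Set.Icc L U),
      (∀ η : Design (Set.Icc L U), Φ (infoMat M η) ≤ Φ (infoMat M ξ)) →
      sameMeasure ξ ξU)
    (hSuppU : ξU.supp.card = m) :
    (U < xmax → L ∈ ξU.supp ∧ U ∈ ξU.supp) ∧
    (xmax ≤ U → sameMeasure ξU ξstar) := by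
  have hΨ (ℓ : Fin (2 * m - 1)) : ContinuousOn (Ψ ℓ) (Set.Icc L B) := (hΨsmooth ℓ).continuousOn
  have hL : L ∈ ξU.supp := left_mem_supp_of_isUniqueOptimal hLB hUB hMpsd hΨ hCheb hComplete hΦ
    ⟨hOptU, hUniqU⟩ hSuppU
  refine ⟨fun hUx => ⟨hL, ?_⟩, fun hxU => ?_⟩
  · exact right_mem_supp_of_lt hLB hUB hMpsd hΨ hCheb hComplete hΦ ⟨hOptFull, hUniqFull⟩
      hxmaxMem hUx hOptU hL hSuppU
  · exact sameMeasure_of_isOptimal_of_supp_le hUB hOptFull ⟨hOptU, hUniqU⟩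
      fun y hy => (hxmaxMax y hy).trans hxU
end

section
/- Consider the Poisson regression model with parameters θ = (θ₁, θ₂) where θ₂ < 0, on the design region [L, ∞) for some L ∈ ℝ. The design ξ* that puts weight 1/2 at the point L and weight 1/2 at the point L − 2/θ₂ satisfies det M_{ξ*} ≥ det M_ξ for every design ξ on [L, ∞); that is, ξ* is D-optimal. -/
/-- Single-observation information matrix of the Poisson regression model. -/
noncomputable def poissonInfo (θ₁ θ₂ : ℝ) (x : ℝ) : Matrix (Fin 2) (Fin 2) ℝ :=
  Real.exp (θ₁ + θ₂ * x) • Matrix.vecMulVec ![1, x] ![1, x]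

lemma DK {v : ℝ} (h0 : 0 ≤ v) (h1 : v ≤ 1) :
    1 - v + v^2/2 - v^3/6 ≤ Real.exp (-v) := by
  have habs : |(-v)| ≤ 1 := by rw [abs_neg, abs_of_nonneg h0]; exact h1
  have hb := Real.exp_bound habs (n := 5) (by norm_num)
  have hs : ∑ m ∈ Finset.range 5, (-v) ^ m / m.factorial
      = 1 - v + v^2/2 - v^3/6 + v^4/24 := by
    simp [Finset.sum_range_succ, Nat.factorial]
    ring
  rw [hs, abs_neg, abs_of_nonneg h0] at hb
  norm_num [Nat.factorial] at hb
  have := abs_le.1 hb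
  nlinarith [pow_nonneg h0 4, pow_nonneg h0 5, this.1, this.2]

lemma Dkey {u : ℝ} (hu : 0 ≤ u) :
    Real.exp 2 * u^2 + (u-2)^2 ≤ 4 * Real.exp u := by
  have he2lo : (7.38 : ℝ) ≤ Real.exp 2 := by
    have h := Real.exp_one_gt_d9
    have : Real.exp 2 = Real.exp 1 * Real.exp 1 := by
      rw [← Real.exp_add]; norm_num
    nlinarith
  have he2hi : Real.exp 2 ≤ (7.39 : ℝ) := by
    have h := Real.exp_one_lt_d9
    have h0 := Real.exp_pos 1
    have : Real.exp 2 = Real.exp 1 * Real.exp 1 := by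
      rw [← Real.exp_add]; norm_num
    nlinarith
  rcases le_or_gt u 1 with h1 | h1
  · have hq := Real.quadratic_le_exp_of_nonneg hu
    nlinarith [sq_nonneg u]
  rcases le_or_gt u 2 with h2 | h2
  · have hv0 : 0 ≤ 2 - u := by linarith
    have hv1 : 2 - u ≤ 1 := by linarith
    have hK := DK hv0 hv1
    have heu : Real.exp u = Real.exp 2 * Real.exp (-(2-u)) := by
      rw [← Real.exp_add]; ring_nf
    rw [heu]
    nlinarith [mul_le_mul_of_nonneg_left hK (le_of_lt (Real.exp_pos 2)), sq_nonneg (2-u),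
      mul_nonneg (mul_nonneg hv0 hv0) hv0]
  · have hw : 0 ≤ u - 2 := by linarith
    have hq := Real.quadratic_le_exp_of_nonneg hw
    have heu : Real.exp u = Real.exp 2 * Real.exp (u-2) := by
      rw [← Real.exp_add]; ring_nf
    rw [heu]
    nlinarith [mul_le_mul_of_nonneg_left hq (le_of_lt (Real.exp_pos 2)), sq_nonneg (u-2)]

lemma Dpt {t : ℝ} (ht : t < 0) {s : ℝ} (hs : 0 ≤ s) :
    Real.exp (t*s) * (s^2 + Real.exp (-2) * (s + 2/t)^2) ≤ 4 * Real.exp (-2) / t^2 := by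
  have hu : 0 ≤ -(t*s) := by nlinarith
  have h := Dkey hu
  have h2 : Real.exp (-2:ℝ) * Real.exp (2:ℝ) = 1 := by
    rw [← Real.exp_add]; norm_num
  have key2 : Real.exp (t*s) * ((t*s)^2 + Real.exp (-2) * (t*s+2)^2) ≤ 4 * Real.exp (-2) := by
    have h3 := mul_le_mul_of_nonneg_left h
      (mul_pos (Real.exp_pos (t*s)) (Real.exp_pos (-(2:ℝ)))).le
    have h1 : Real.exp (t*s) * Real.exp (-(t*s)) = 1 := by
      rw [← Real.exp_add]; simp
    have he : Real.exp (t*s) * ((t*s)^2 + Real.exp (-2) * (t*s+2)^2)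
        = Real.exp (t*s) * Real.exp (-2) * (Real.exp 2 * (-(t*s))^2 + (-(t*s)-2)^2) := by
      linear_combination (-(Real.exp (t*s) * (t*s)^2)) * h2
    rw [he]
    calc Real.exp (t*s) * Real.exp (-2) * (Real.exp 2 * (-(t*s))^2 + (-(t*s)-2)^2)
        ≤ Real.exp (t*s) * Real.exp (-2) * (4 * Real.exp (-(t*s))) := h3
      _ = 4 * Real.exp (-2) := by
          rw [show Real.exp (t*s) * Real.exp (-2) * (4 * Real.exp (-(t*s)))
            = 4 * Real.exp (-2) * (Real.exp (t*s) * Real.exp (-(t*s))) by ring, h1, mul_one]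
  have ht' : t ≠ 0 := ne_of_lt ht
  have ht2 : (0:ℝ) < t^2 := by nlinarith [sq_nonneg t, sq_abs t]
  rw [le_div_iff₀ ht2]
  have hexpand : (s^2 + Real.exp (-2) * (s + 2/t)^2) * t^2
      = (t*s)^2 + Real.exp (-2) * (t*s+2)^2 := by
    field_simp
  calc Real.exp (t*s) * (s^2 + Real.exp (-2) * (s + 2/t)^2) * t^2
      = Real.exp (t*s) * ((t*s)^2 + Real.exp (-2) * (t*s+2)^2) := by rw [mul_assoc, hexpand]
    _ ≤ 4 * Real.exp (-2) := key2

lemma Dalg {α β γ a b c : ℝ} (hα : 0 ≤ α) (hγ : 0 ≤ γ) (ha : 0 ≤ a) (hc : 0 ≤ c)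
    (hβ : β^2 ≤ α*γ) (hD : 0 < α*γ - β^2)
    (hT : γ*a - 2*β*b + α*c ≤ 2*(α*γ - β^2)) :
    a*c - b^2 ≤ α*γ - β^2 := by
  rcases le_or_gt (a*c - b^2) 0 with hX | hX
  · linarith
  have hb2 : b^2 ≤ a*c := by linarith
  have hprod : β^2 * b^2 ≤ (α*γ) * (a*c) :=
    mul_le_mul hβ hb2 (sq_nonneg b) (by positivity)
  have h6 : 0 ≤ γ*a + α*c := add_nonneg (mul_nonneg hγ ha) (mul_nonneg hα hc)
  have hT0 : 0 ≤ γ*a - 2*β*b + α*c := by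
    nlinarith [sq_nonneg (γ*a - α*c), hprod, h6]
  have hQ : 4*(α*γ - β^2)*(a*c - b^2) ≤ (γ*a - 2*β*b + α*c)^2 := by
    set p := α*b - β*a with hp
    set q := γ*b - β*c with hq
    have hid : (γ*a - 2*β*b + α*c)^2 - 4*(α*γ-β^2)*(a*c-b^2)
        = (γ*a-α*c)^2 + 4*(p*q) := by rw [hp, hq]; ring
    rcases le_or_gt 0 (p*q) with hpq | hpq
    · nlinarith [sq_nonneg (γ*a-α*c)]
    · have hβ2 : 0 < β^2 := by
        rcases eq_or_ne β 0 with hb0 | hb0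
        · exfalso
          have : p*q = α*γ*b^2 := by rw [hp, hq, hb0]; ring
          nlinarith [mul_nonneg (mul_nonneg hα hγ) (sq_nonneg b)]
        · positivity
      have hidd : β^2*((γ*a-α*c)^2 + 4*(p*q))
          = γ^2*p^2 + α^2*q^2 - 2*(α*γ-2*β^2)*(p*q) := by rw [hp, hq]; ring
      have h5 : 0 ≤ (-(p*q)) * (α*γ - β^2) :=
        mul_nonneg (by linarith) (by linarith)
      nlinarith [sq_nonneg (γ*p + α*q), hidd, h5, hβ2, sq_nonneg (γ*a - α*c)]
  nlinarith [hQ, hT0, hT, hD, hX]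

set_option maxHeartbeats 1000000 in
/-- the two-point design with weight 1/2 at `L` and weight 1/2 at
`L - 2/θ₂` is D-optimal for Poisson regression with `θ₂ < 0` on `[L, ∞)`. -/
theorem stmt8 (θ₁ θ₂ : ℝ) (hθ₂ : θ₂ < 0) (L : ℝ) :
    ∀ ξ : Design (Set.Ici L),
      (infoMat (poissonInfo θ₁ θ₂) ξ).det ≤
        ((1 / 2 : ℝ) • poissonInfo θ₁ θ₂ L +
          (1 / 2 : ℝ) • poissonInfo θ₁ θ₂ (L - 2 / θ₂)).det := by
  intro ξ
  have ht' : θ₂ ≠ 0 := ne_of_lt hθ₂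
  have ht2 : (0:ℝ) < θ₂^2 := by nlinarith [sq_nonneg θ₂, sq_abs θ₂]
  set gL := Real.exp (θ₁ + θ₂ * L) with hgL
  have hgLpos : 0 < gL := Real.exp_pos _
  set E := Real.exp (-2 : ℝ) with hE
  have hEpos : 0 < E := Real.exp_pos _
  set m := L - 2/θ₂ with hm
  have hgm : Real.exp (θ₁ + θ₂ * m) = gL * E := by
    rw [hgL, hE, ← Real.exp_add]
    congr 1
    rw [hm]
    field_simp
    ring
  set α := (gL + gL*E)/2 with hα
  set β := (gL*L + gL*E*m)/2 with hβ
  set γ := (gL*L^2 + gL*E*m^2)/2 with hγ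
  have hLm : (L - m)^2 = 4/θ₂^2 := by
    rw [hm]
    field_simp
    ring
  have hDval : α*γ - β^2 = gL^2*E/θ₂^2 := by
    have : α*γ - β^2 = gL^2*E*(L-m)^2/4 := by rw [hα, hβ, hγ]; ring
    rw [this, hLm]
    field_simp
  have hD : 0 < α*γ - β^2 := by rw [hDval]; positivity
  -- right-hand side determinant
  have hdet2 : ((1 / 2 : ℝ) • poissonInfo θ₁ θ₂ L +
      (1 / 2 : ℝ) • poissonInfo θ₁ θ₂ (L - 2 / θ₂)).det = α*γ - β^2 := by
    rw [show L - 2/θ₂ = m from hm.symm]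
    simp only [poissonInfo, Matrix.det_fin_two, Matrix.add_apply, Matrix.smul_apply,
      Matrix.vecMulVec_apply, smul_eq_mul, Matrix.cons_val_zero, Matrix.cons_val_one,
      Matrix.head_cons, hgm]
    rw [hα, hβ, hγ]
    ring
  -- design information matrix entries
  set g : ℝ → ℝ := fun x => Real.exp (θ₁ + θ₂ * x) with hg
  set a := ∑ x ∈ ξ.pts, ξ.w x * g x with ha_def
  set b := ∑ x ∈ ξ.pts, ξ.w x * (g x * x) with hb_def
  set c := ∑ x ∈ ξ.pts, ξ.w x * (g x * x^2) with hc_def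
  have hA : ∀ i j, (infoMat (poissonInfo θ₁ θ₂) ξ) i j
      = ∑ x ∈ ξ.pts, ξ.w x * (g x * ((![1,x] : Fin 2 → ℝ) i * (![1,x] : Fin 2 → ℝ) j)) := by
    intro i j
    rw [infoMat, Matrix.sum_apply]
    refine Finset.sum_congr rfl (fun x hx => ?_)
    fin_cases i <;> fin_cases j <;>
      simp [poissonInfo, Matrix.smul_apply, Matrix.vecMulVec_apply, smul_eq_mul, hg]
  have hdetA : (infoMat (poissonInfo θ₁ θ₂) ξ).det = a*c - b^2 := by
    rw [Matrix.det_fin_two, hA, hA, hA, hA]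
    simp only [Matrix.cons_val_zero, Matrix.cons_val_one, Matrix.head_cons]
    have e00 : ∑ x ∈ ξ.pts, ξ.w x * (g x * ((1:ℝ)*1)) = a := by
      rw [ha_def]; exact Finset.sum_congr rfl (fun x hx => by ring)
    have e01 : ∑ x ∈ ξ.pts, ξ.w x * (g x * ((1:ℝ)*x)) = b := by
      rw [hb_def]; exact Finset.sum_congr rfl (fun x hx => by ring)
    have e10 : ∑ x ∈ ξ.pts, ξ.w x * (g x * (x*(1:ℝ))) = b := by
      rw [hb_def]; exact Finset.sum_congr rfl (fun x hx => by ring)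
    have e11 : ∑ x ∈ ξ.pts, ξ.w x * (g x * (x*x)) = c := by
      rw [hc_def]; exact Finset.sum_congr rfl (fun x hx => by ring)
    rw [e00, e01, e10, e11]
    ring
  have ha : 0 ≤ a := Finset.sum_nonneg fun x hx =>
    mul_nonneg (ξ.w_nonneg x hx) (Real.exp_pos _).le
  have hc : 0 ≤ c := Finset.sum_nonneg fun x hx =>
    mul_nonneg (ξ.w_nonneg x hx) (mul_nonneg (Real.exp_pos _).le (sq_nonneg x))
  have hα0 : 0 ≤ α := by rw [hα]; positivity
  have hγ0 : 0 ≤ γ := by rw [hγ]; positivity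
  have hβ2 : β^2 ≤ α*γ := by linarith
  -- pointwise inequality
  have hpt : ∀ x ∈ ξ.pts, g x * (γ - 2*β*x + α*x^2) ≤ 2*(α*γ - β^2) := by
    intro x hx
    have hxL : L ≤ x := ξ.mem_pts x hx
    have hs : 0 ≤ x - L := by linarith
    have hgx : g x = gL * Real.exp (θ₂*(x-L)) := by
      have h0 : g x = Real.exp (θ₁ + θ₂ * x) := rfl
      have h1 : gL = Real.exp (θ₁ + θ₂ * L) := rfl
      rw [h0, h1, ← Real.exp_add]
      congr 1
      ring
    have hxm : x - m = (x - L) + 2/θ₂ := by rw [hm]; ring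
    have hquad : γ - 2*β*x + α*x^2 = gL/2 * ((x-L)^2 + E*(x-m)^2) := by
      rw [hα, hβ, hγ]; ring
    have hptl := Dpt hθ₂ hs
    rw [hgx, hquad, hxm, hDval]
    calc gL * Real.exp (θ₂*(x-L)) * (gL/2 * ((x-L)^2 + E*((x-L) + 2/θ₂)^2))
        = gL^2/2 * (Real.exp (θ₂*(x-L)) * ((x-L)^2 + E*((x-L) + 2/θ₂)^2)) := by ring
      _ ≤ gL^2/2 * (4*E/θ₂^2) := by
          refine mul_le_mul_of_nonneg_left ?_ (by positivity)
          rw [hE]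
          exact hptl
      _ = 2*(gL^2*E/θ₂^2) := by ring
  have hTsum : γ*a - 2*β*b + α*c
      = ∑ x ∈ ξ.pts, ξ.w x * (g x * (γ - 2*β*x + α*x^2)) := by
    rw [ha_def, hb_def, hc_def, Finset.mul_sum, Finset.mul_sum, Finset.mul_sum,
      ← Finset.sum_sub_distrib, ← Finset.sum_add_distrib]
    exact Finset.sum_congr rfl (fun x hx => by ring)
  have hT : γ*a - 2*β*b + α*c ≤ 2*(α*γ - β^2) := by
    rw [hTsum]
    calc ∑ x ∈ ξ.pts, ξ.w x * (g x * (γ - 2*β*x + α*x^2))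
        ≤ ∑ x ∈ ξ.pts, ξ.w x * (2*(α*γ - β^2)) :=
          Finset.sum_le_sum (fun x hx =>
            mul_le_mul_of_nonneg_left (hpt x hx) (ξ.w_nonneg x hx))
      _ = 2*(α*γ - β^2) := by rw [← Finset.sum_mul, ξ.w_sum, one_mul]
  rw [hdetA, hdet2]
  exact Dalg hα0 hγ0 ha hc hβ2 hD hT
end

section
/- Consider the Emax model with parameters θ = (θ₁, θ₂, θ₃), θ₂ > 0, θ₃ > 0, on the design region [L,U] with 0 < L < U. Let x_E* = (L(U+θ₃) + U(L+θ₃))/(L + U + 2θ₃). The design ξ* that puts weight 1/3 at each of the three points L, x_E*, and U satisfies det M_{ξ*} ≥ det M_ξ for every design ξ on [L,U]; that is, ξ* is D-optimal. Moreover L < x_E* < U. -/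
/-- Gradient vector of the Emax model. -/
noncomputable def fEmax (θ₂ θ₃ : ℝ) (x : ℝ) : Fin 3 → ℝ :=
  ![1, x / (x + θ₃), -θ₂ * x / (x + θ₃) ^ 2]

/-- Single-observation information matrix of the Emax model. -/
noncomputable def emaxInfo (θ₂ θ₃ : ℝ) (x : ℝ) : Matrix (Fin 3) (Fin 3) ℝ :=
  Matrix.vecMulVec (fEmax θ₂ θ₃ x) (fEmax θ₂ θ₃ x)

/-!
In the coordinate `u = x / (x + θ₃)` the regression vector `f` is a quadratic polynomial, and
`x_E*` is the point whose `u`-coordinate is the midpoint of those of `L` and `U`. Lagrange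
interpolation at the three support points therefore gives `f x = A ℓ(t x)`, where the columns
of `A` are `f L, f x_E*, f U`, `ℓ` is the Lagrange basis for the nodes `-1, 0, 1` and
`t x ∈ [-1, 1]` is `u` rescaled affinely. Hence `M_ξ = A N_ξ Aᵀ` with `N_ξ = ∑ ω ℓ ℓᵀ`
positive semidefinite of trace `∑ ω |ℓ|² ≤ 1`, since `|ℓ t|² = 1 - 3/2 t² (1 - t²)`. AM–GM on
the eigenvalues gives `det N_ξ ≤ 1/27`, so `det M_ξ ≤ (det A)² / 27 = det M_ξ*`.
-/

open Matrix Finset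

lemma Real.prod_le_arith_mean_pow {ι : Type*} [Fintype ι] {z : ι → ℝ} (hz : ∀ i, 0 ≤ z i) :
    ∏ i, z i ≤ ((∑ i, z i) / Fintype.card ι) ^ Fintype.card ι := by
  rcases isEmpty_or_nonempty ι with _ | _
  · simp
  set n := Fintype.card ι
  have hn : n ≠ 0 := Fintype.card_ne_zero
  have amgm := Real.geom_mean_le_arith_mean_weighted univ (fun _ ↦ (n : ℝ)⁻¹) z
    (fun _ _ ↦ by positivity) (by simp [n]) (fun i _ ↦ hz i)
  calc ∏ i, z i = (∏ i, z i ^ (n : ℝ)⁻¹) ^ n := by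
        rw [← prod_pow]
        exact prod_congr rfl fun i _ ↦ (Real.rpow_inv_natCast_pow (hz i) hn).symm
    _ ≤ ((∑ i, z i) / n) ^ n := by
        refine pow_le_pow_left₀ (prod_nonneg fun i _ ↦ Real.rpow_nonneg (hz i) _) ?_ n
        rwa [← inv_mul_eq_div, mul_sum]

lemma Matrix.PosSemidef.det_le_trace_div_card_pow {n : Type*} [Fintype n] [DecidableEq n]
    {A : Matrix n n ℝ} (hA : A.PosSemidef) :
    A.det ≤ (A.trace / Fintype.card n) ^ Fintype.card n := by
  rw [hA.isHermitian.det_eq_prod_eigenvalues, hA.isHermitian.trace_eq_sum_eigenvalues]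
  exact Real.prod_le_arith_mean_pow hA.eigenvalues_nonneg

section InfoMat

variable {I : Set ℝ} (ξ : Design I)

lemma infoMat_congr {d : ℕ} {M M' : ℝ → Matrix (Fin d) (Fin d) ℝ} (h : ∀ x ∈ I, M x = M' x) :
    infoMat M ξ = infoMat M' ξ :=
  sum_congr rfl fun x hx ↦ by rw [h x (ξ.mem_pts x hx)]

lemma infoMat_vecMulVec_mulVec {d e : ℕ} (A : Matrix (Fin d) (Fin e) ℝ) (g : ℝ → Fin e → ℝ) :
    infoMat (fun x ↦ vecMulVec (A *ᵥ g x) (A *ᵥ g x)) ξ =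
      A * infoMat (fun x ↦ vecMulVec (g x) (g x)) ξ * Aᵀ := by
  rw [infoMat, infoMat, Matrix.mul_sum, Matrix.sum_mul]
  refine sum_congr rfl fun x _ ↦ ?_
  rw [Matrix.mul_smul, Matrix.smul_mul, mul_vecMulVec, vecMulVec_mul, vecMul_transpose]

lemma posSemidef_infoMat_vecMulVec {d : ℕ} (g : ℝ → Fin d → ℝ) :
    (infoMat (fun x ↦ vecMulVec (g x) (g x)) ξ).PosSemidef :=
  posSemidef_sum _ fun x hx ↦ (posSemidef_vecMulVec_self_star (g x)).smul (ξ.w_nonneg x hx)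

lemma trace_infoMat_vecMulVec_le_one {d : ℕ} {g : ℝ → Fin d → ℝ}
    (hg : ∀ x ∈ I, g x ⬝ᵥ g x ≤ 1) :
    (infoMat (fun x ↦ vecMulVec (g x) (g x)) ξ).trace ≤ 1 := by
  simp only [infoMat, trace_sum, trace_smul, trace_vecMulVec, smul_eq_mul]
  calc ∑ x ∈ ξ.pts, ξ.w x * (g x ⬝ᵥ g x) ≤ ∑ x ∈ ξ.pts, ξ.w x :=
        sum_le_sum fun x hx ↦ mul_le_of_le_one_right (ξ.w_nonneg x hx) (hg x (ξ.mem_pts x hx))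
    _ = 1 := ξ.w_sum

lemma det_infoMat_vecMulVec_le {d : ℕ} {g : ℝ → Fin d → ℝ} (hg : ∀ x ∈ I, g x ⬝ᵥ g x ≤ 1) :
    (infoMat (fun x ↦ vecMulVec (g x) (g x)) ξ).det ≤ ((d : ℝ)⁻¹) ^ d := by
  have hN := posSemidef_infoMat_vecMulVec ξ g
  calc _ ≤ (_ / (Fintype.card (Fin d) : ℝ)) ^ Fintype.card (Fin d) := hN.det_le_trace_div_card_pow
    _ ≤ ((d : ℝ)⁻¹) ^ d := by
        rw [Fintype.card_fin, ← one_div]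
        gcongr
        · exact div_nonneg hN.trace_nonneg d.cast_nonneg
        · exact trace_infoMat_vecMulVec_le_one ξ hg

end InfoMat

noncomputable def lagrangeBasis₃ (t : ℝ) : Fin 3 → ℝ :=
  ![t * (t - 1) / 2, 1 - t ^ 2, t * (t + 1) / 2]

lemma lagrangeBasis₃_dotProduct_self_le_one {t : ℝ} (ht : t ∈ Set.Icc (-1) 1) :
    lagrangeBasis₃ t ⬝ᵥ lagrangeBasis₃ t ≤ 1 := by
  have hsq : lagrangeBasis₃ t ⬝ᵥ lagrangeBasis₃ t = 1 - 3 / 2 * t ^ 2 * (1 - t ^ 2) := by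
    simp only [lagrangeBasis₃, dotProduct, Fin.sum_univ_three, Matrix.cons_val]
    ring
  have : 0 ≤ t ^ 2 * (1 - t ^ 2) := mul_nonneg (sq_nonneg t) (by nlinarith [ht.1, ht.2])
  linarith

lemma quadratic_eq_mulVec_lagrangeBasis₃ {k : ℕ} {q : ℝ → Fin k → ℝ} {a b c : Fin k → ℝ}
    (hq : ∀ u, q u = a + u • b + u ^ 2 • c) (m h t : ℝ) :
    q (m + t * h) = (of ![q (m - h), q m, q (m + h)])ᵀ *ᵥ lagrangeBasis₃ t := by
  ext i
  simp only [hq, lagrangeBasis₃, mulVec, dotProduct, Fin.sum_univ_three, transpose_apply, of_apply,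
    Matrix.cons_val, Pi.add_apply, Pi.smul_apply, smul_eq_mul]
  ring

section Emax

variable {θ₂ θ₃ L U : ℝ}

noncomputable def emaxMidpoint (θ₃ L U : ℝ) : ℝ :=
  (L * (U + θ₃) + U * (L + θ₃)) / (L + U + 2 * θ₃)

noncomputable def emaxNodeMatrix (θ₂ θ₃ L U : ℝ) : Matrix (Fin 3) (Fin 3) ℝ :=
  (of ![fEmax θ₂ θ₃ L, fEmax θ₂ θ₃ (emaxMidpoint θ₃ L U), fEmax θ₂ θ₃ U])ᵀ

noncomputable def emaxCoord (θ₃ L U x : ℝ) : ℝ :=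
  (2 * (x / (x + θ₃)) - L / (L + θ₃) - U / (U + θ₃)) / (U / (U + θ₃) - L / (L + θ₃))

noncomputable def emaxQuadratic (θ₂ θ₃ u : ℝ) : Fin 3 → ℝ :=
  ![1, u, -θ₂ / θ₃ * (u * (1 - u))]

lemma emaxQuadratic_eq (θ₂ θ₃ u : ℝ) :
    emaxQuadratic θ₂ θ₃ u = ![1, 0, 0] + u • ![0, 1, -θ₂ / θ₃] + u ^ 2 • ![0, 0, θ₂ / θ₃] := by
  ext i
  fin_cases i <;> simp only [emaxQuadratic, Fin.zero_eta, Fin.mk_one, Fin.reduceFinMk,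
    Matrix.cons_val, Pi.add_apply, Pi.smul_apply, smul_eq_mul] <;> ring

lemma fEmax_eq_emaxQuadratic (hθ₃ : θ₃ ≠ 0) {x : ℝ} (hx : x + θ₃ ≠ 0) :
    fEmax θ₂ θ₃ x = emaxQuadratic θ₂ θ₃ (x / (x + θ₃)) := by
  ext i
  fin_cases i <;> simp only [fEmax, emaxQuadratic, Fin.zero_eta, Fin.mk_one, Fin.reduceFinMk,
    Matrix.cons_val]
  field_simp
  ring

lemma emaxMidpoint_mem_Ioo (hL : 0 < L + θ₃) (hLU : L < U) :
    emaxMidpoint θ₃ L U ∈ Set.Ioo L U := by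
  have hden : 0 < L + U + 2 * θ₃ := by linarith
  constructor
  · rw [emaxMidpoint, lt_div_iff₀ hden]
    nlinarith
  · rw [emaxMidpoint, div_lt_iff₀ hden]
    nlinarith

lemma emaxMidpoint_div (hL : 0 < L + θ₃) (hLU : L < U) :
    emaxMidpoint θ₃ L U / (emaxMidpoint θ₃ L U + θ₃) = (L / (L + θ₃) + U / (U + θ₃)) / 2 := by
  have hden : 0 < L + U + 2 * θ₃ := by linarith
  have hU : 0 < U + θ₃ := by linarith
  have hadd : emaxMidpoint θ₃ L U + θ₃ = 2 * (L + θ₃) * (U + θ₃) / (L + U + 2 * θ₃) := by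
    rw [emaxMidpoint, div_add' _ _ _ hden.ne']
    ring
  rw [hadd, emaxMidpoint, div_div_div_cancel_right₀ hden.ne']
  field_simp

lemma strictMonoOn_div_add (hθ₃ : 0 < θ₃) :
    StrictMonoOn (fun x ↦ x / (x + θ₃)) (Set.Ioi (-θ₃)) := fun a ha b hb hab ↦ by
  simp only [Set.mem_Ioi] at ha hb
  rw [div_lt_div_iff₀ (by linarith) (by linarith)]
  nlinarith

lemma emaxCoord_mem_Icc (hθ₃ : 0 < θ₃) (hL : 0 < L + θ₃) (hLU : L < U) {x : ℝ}
    (hx : x ∈ Set.Icc L U) : emaxCoord θ₃ L U x ∈ Set.Icc (-1) 1 := by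
  have hmono := strictMonoOn_div_add hθ₃
  have hmem : ∀ y, L ≤ y → y ∈ Set.Ioi (-θ₃) := fun y hy ↦ by simp only [Set.mem_Ioi]; linarith
  have hLx := (hmono.le_iff_le (hmem L le_rfl) (hmem x hx.1)).2 hx.1
  have hxU := (hmono.le_iff_le (hmem x hx.1) (hmem U hLU.le)).2 hx.2
  have hLU' := hmono (hmem L le_rfl) (hmem U hLU.le) hLU
  simp only at hLx hxU hLU'
  rw [emaxCoord, Set.mem_Icc, le_div_iff₀ (sub_pos.2 hLU'), div_le_iff₀ (sub_pos.2 hLU')]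
  constructor <;> linarith

lemma fEmax_eq_emaxNodeMatrix_mulVec (hθ₃ : 0 < θ₃) (hL : 0 < L + θ₃) (hLU : L < U) {x : ℝ}
    (hx : x ∈ Set.Icc L U) :
    fEmax θ₂ θ₃ x = emaxNodeMatrix θ₂ θ₃ L U *ᵥ lagrangeBasis₃ (emaxCoord θ₃ L U x) := by
  set uL := L / (L + θ₃)
  set uU := U / (U + θ₃)
  have hne : ∀ y, L ≤ y → y + θ₃ ≠ 0 := fun y hy ↦ by linarith
  have hLU' : uL < uU := strictMonoOn_div_add hθ₃
    (by simp only [Set.mem_Ioi]; linarith) (by simp only [Set.mem_Ioi]; linarith) hLU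
  have hux : x / (x + θ₃) = (uL + uU) / 2 + emaxCoord θ₃ L U x * ((uU - uL) / 2) := by
    have : uU - uL ≠ 0 := (sub_pos.2 hLU').ne'
    change _ = _ + (2 * (x / (x + θ₃)) - uL - uU) / (uU - uL) * _
    field_simp
    ring
  have key := quadratic_eq_mulVec_lagrangeBasis₃ (emaxQuadratic_eq θ₂ θ₃) ((uL + uU) / 2)
    ((uU - uL) / 2) (emaxCoord θ₃ L U x)
  rw [← hux, show (uL + uU) / 2 - (uU - uL) / 2 = uL by ring,
    show (uL + uU) / 2 + (uU - uL) / 2 = uU by ring, ← emaxMidpoint_div hL hLU] at key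
  obtain ⟨hLm, -⟩ := emaxMidpoint_mem_Ioo hL hLU
  rw [emaxNodeMatrix, fEmax_eq_emaxQuadratic hθ₃.ne' (hne x hx.1),
    fEmax_eq_emaxQuadratic hθ₃.ne' (hne L le_rfl), fEmax_eq_emaxQuadratic hθ₃.ne' (hne U hLU.le),
    fEmax_eq_emaxQuadratic hθ₃.ne' (hne _ hLm.le)]
  exact key

lemma emaxNodeMatrix_mul_transpose (θ₂ θ₃ L U : ℝ) :
    emaxNodeMatrix θ₂ θ₃ L U * (emaxNodeMatrix θ₂ θ₃ L U)ᵀ =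
      emaxInfo θ₂ θ₃ L + emaxInfo θ₂ θ₃ (emaxMidpoint θ₃ L U) + emaxInfo θ₂ θ₃ U := by
  ext i j
  simp [emaxNodeMatrix, emaxInfo, mul_apply, Fin.sum_univ_three, vecMulVec_apply]

end Emax

theorem stmt9_general (θ₂ θ₃ : ℝ) (hθ₃ : 0 < θ₃) (L U : ℝ)
    (hL : 0 < L) (hLU : L < U) :
    (∀ ξ : Design (Set.Icc L U),
      (infoMat (emaxInfo θ₂ θ₃) ξ).det ≤
        ((1 / 3 : ℝ) • emaxInfo θ₂ θ₃ L +
          (1 / 3 : ℝ) • emaxInfo θ₂ θ₃ ((L * (U + θ₃) + U * (L + θ₃)) / (L + U + 2 * θ₃)) +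
          (1 / 3 : ℝ) • emaxInfo θ₂ θ₃ U).det) ∧
    L < (L * (U + θ₃) + U * (L + θ₃)) / (L + U + 2 * θ₃) ∧
    (L * (U + θ₃) + U * (L + θ₃)) / (L + U + 2 * θ₃) < U := by
  have hLθ : 0 < L + θ₃ := by linarith
  rw [← emaxMidpoint]
  refine ⟨fun ξ ↦ ?_, emaxMidpoint_mem_Ioo hLθ hLU⟩
  set A := emaxNodeMatrix θ₂ θ₃ L U
  set g := fun x ↦ lagrangeBasis₃ (emaxCoord θ₃ L U x)
  have hM : infoMat (emaxInfo θ₂ θ₃) ξ = A * infoMat (fun x ↦ vecMulVec (g x) (g x)) ξ * Aᵀ := by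
    rw [← infoMat_vecMulVec_mulVec]
    exact infoMat_congr ξ fun x hx ↦ by
      rw [emaxInfo, fEmax_eq_emaxNodeMatrix_mulVec hθ₃ hLθ hLU hx]
  have hN := det_infoMat_vecMulVec_le ξ (g := g) fun x hx ↦
    lagrangeBasis₃_dotProduct_self_le_one (emaxCoord_mem_Icc hθ₃ hLθ hLU hx)
  rw [← smul_add, ← smul_add, ← emaxNodeMatrix_mul_transpose, hM, det_smul, det_mul, det_mul,
    det_mul, det_transpose, Fintype.card_fin]
  linarith [mul_le_mul_of_nonneg_left hN (mul_self_nonneg A.det)]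

/-- the design with weight 1/3 at each of `L`, `x_E*`, `U` is D-optimal
for the Emax model, and `L < x_E* < U`. -/
theorem stmt9 (θ₁ θ₂ θ₃ : ℝ) (hθ₂ : 0 < θ₂) (hθ₃ : 0 < θ₃) (L U : ℝ)
    (hL : 0 < L) (hLU : L < U) :
    (∀ ξ : Design (Set.Icc L U),
      (infoMat (emaxInfo θ₂ θ₃) ξ).det ≤
        ((1 / 3 : ℝ) • emaxInfo θ₂ θ₃ L +
          (1 / 3 : ℝ) • emaxInfo θ₂ θ₃ ((L * (U + θ₃) + U * (L + θ₃)) / (L + U + 2 * θ₃)) +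
          (1 / 3 : ℝ) • emaxInfo θ₂ θ₃ U).det) ∧
    L < (L * (U + θ₃) + U * (L + θ₃)) / (L + U + 2 * θ₃) ∧
    (L * (U + θ₃) + U * (L + θ₃)) / (L + U + 2 * θ₃) < U :=
  stmt9_general θ₂ θ₃ hθ₃ L U hL hLU
end

section
/- Consider the log-linear model with parameters θ = (θ₁, θ₂, θ₃), θ₂ > 0, θ₃ > 0, on the design region [L,U] with 0 < L < U. Let x_l* = ((L+θ₃)(U+θ₃)/(U−L)) · log((U+θ₃)/(L+θ₃)) − θ₃. The design ξ* that puts weight 1/3 at each of the three points L, x_l*, and U satisfies det M_{ξ*} ≥ det M_ξ for every design ξ on [L,U]; that is, ξ* is D-optimal. Moreover L < x_l* < U. -/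
/-- Gradient vector of the log-linear model. -/
noncomputable def fLogLin (θ₂ θ₃ : ℝ) (x : ℝ) : Fin 3 → ℝ :=
  ![1, Real.log (x + θ₃), θ₂ / (x + θ₃)]

/-- Single-observation information matrix of the log-linear model. -/
noncomputable def logLinInfo (θ₂ θ₃ : ℝ) (x : ℝ) : Matrix (Fin 3) (Fin 3) ℝ :=
  Matrix.vecMulVec (fLogLin θ₂ θ₃ x) (fLogLin θ₂ θ₃ x)

/-!
In the variable `t = log ((x + θ₃) / (L + θ₃)) ∈ [0, T]` the regression vector of the model is a
fixed invertible linear image of `g(t) = (1, t, e^{-t})`, and the three support points become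
`0 < m < T`. By Cramer's rule `g(t) = Gᵀ ℓ(t)`, where `G` has rows `g(0), g(m), g(T)` and `ℓ` are
the Lagrange functions of these nodes. Hence, with `F` the matrix of regression vectors at the
support points, every information matrix is `Fᵀ S F` with `S = Σ w ℓ ℓᵀ` positive semidefinite of
trace `Σ w |ℓ|²`. Once `|ℓ(t)| ≤ 1` on `[0, T]`, AM-GM on the eigenvalues of `S` gives
`det S ≤ 1/27`, which the equal-weight design attains.

The bound `|ℓ|² ≤ 1` is a zero count. `H = (det G)² (1 - |ℓ|²)` vanishes at `0, m, T`, its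
derivative vanishes at `m` (this is the equation defining `m`) and is positive at `0` and negative
at `T`, while `H''` lies in the span of `1, e^{-t}, t e^{-t}, e^{-2t}`, whose nonzero elements have
at most three zeros. A negative value of `H` would make `H'` zigzag so that `H''` changes sign four
times.
-/

open Real Set Matrix

section DOptimality

lemma Matrix.PosSemidef.det_le_trace_div_pow {n : Type*} [Fintype n] [DecidableEq n]
    {S : Matrix n n ℝ} (hS : S.PosSemidef) :
    S.det ≤ (S.trace / Fintype.card n) ^ Fintype.card n := by
  rcases isEmpty_or_nonempty n with hn | hn
  · simp
  set ev := hS.isHermitian.eigenvalues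
  have hev : ∀ i ∈ Finset.univ, 0 ≤ ev i := fun i _ => hS.eigenvalues_nonneg i
  have hcard : Fintype.card n ≠ 0 := Fintype.card_ne_zero
  have hamgm := Real.geom_mean_le_arith_mean_weighted Finset.univ
    (fun _ => (Fintype.card n : ℝ)⁻¹) ev (fun _ _ => by positivity)
    (by simp [Finset.card_univ, hcard]) hev
  rw [hS.isHermitian.det_eq_prod_eigenvalues, hS.isHermitian.trace_eq_sum_eigenvalues]
  simp only [RCLike.ofReal_real_eq_id, id, ← Finset.mul_sum] at hamgm ⊢
  rw [Real.finsetProd_rpow _ _ hev] at hamgm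
  calc ∏ i, ev i = ((∏ i, ev i) ^ (Fintype.card n : ℝ)⁻¹) ^ Fintype.card n :=
        (rpow_inv_natCast_pow (Finset.prod_nonneg hev) hcard).symm
    _ ≤ _ := by
        gcongr
        · exact rpow_nonneg (Finset.prod_nonneg hev) _
        · rw [div_eq_inv_mul]; exact hamgm

lemma Matrix.vecMulVec_mulVec_self {m n α : Type*} [Fintype n] [CommSemiring α]
    (A : Matrix m n α) (u : n → α) :
    vecMulVec (A *ᵥ u) (A *ᵥ u) = A * vecMulVec u u * Aᵀ := by
  rw [mul_vecMulVec, vecMulVec_mul, vecMul_transpose]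

lemma Matrix.of_mulVec_eq_mul_transpose {m n k α : Type*} [Fintype k] [CommSemiring α]
    (A : Matrix n k α) (G : Matrix m k α) : (of fun i => A *ᵥ G i) = G * Aᵀ := by
  ext i j
  simp [mul_apply, mulVec, dotProduct, mul_comm]

lemma det_sum_smul_vecMulVec_le {ι : Type*} {d : ℕ} (s : Finset ι) (w : ι → ℝ)
    (ℓ : ι → Fin d → ℝ) (hw : ∀ x ∈ s, 0 ≤ w x) (hw₁ : ∑ x ∈ s, w x = 1)
    (hℓ : ∀ x ∈ s, ∑ i, ℓ x i ^ 2 ≤ 1) :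
    (∑ x ∈ s, w x • vecMulVec (ℓ x) (ℓ x)).det ≤ (d : ℝ)⁻¹ ^ d := by
  have hpsd : (∑ x ∈ s, w x • vecMulVec (ℓ x) (ℓ x)).PosSemidef :=
    posSemidef_sum s fun x hx => by
      simpa using (posSemidef_vecMulVec_self_star (ℓ x)).smul (hw x hx)
  have htr : (∑ x ∈ s, w x • vecMulVec (ℓ x) (ℓ x)).trace ≤ 1 := by
    calc _ = ∑ x ∈ s, w x * ∑ i, ℓ x i ^ 2 := by
          simp [trace_sum, trace_smul, dotProduct, sq]
      _ ≤ ∑ x ∈ s, w x * 1 := by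
          gcongr with x hx
          · exact hw x hx
          · exact hℓ x hx
      _ = 1 := by simp [hw₁]
  calc _ ≤ _ := hpsd.det_le_trace_div_pow
    _ ≤ (1 / d) ^ d := by
        simp only [Fintype.card_fin]
        gcongr
        exact div_nonneg hpsd.trace_nonneg (Nat.cast_nonneg _)
    _ = _ := by rw [one_div]

theorem det_infoMat_le_of_lagrange {d : ℕ} {I : Set ℝ} {f ℓ : ℝ → Fin d → ℝ}
    {F : Matrix (Fin d) (Fin d) ℝ} (hf : ∀ x ∈ I, f x = Fᵀ *ᵥ ℓ x)
    (hℓ : ∀ x ∈ I, ∑ i, ℓ x i ^ 2 ≤ 1) (ξ : Design I) :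
    (infoMat (fun x => vecMulVec (f x) (f x)) ξ).det ≤ F.det ^ 2 * (d : ℝ)⁻¹ ^ d := by
  have hM : infoMat (fun x => vecMulVec (f x) (f x)) ξ =
      Fᵀ * (∑ x ∈ ξ.pts, ξ.w x • vecMulVec (ℓ x) (ℓ x)) * F := by
    simp only [infoMat, Matrix.mul_sum, Matrix.sum_mul, Matrix.mul_smul, Matrix.smul_mul]
    refine Finset.sum_congr rfl fun x hx => ?_
    rw [hf x (ξ.mem_pts x hx), vecMulVec_mulVec_self, transpose_transpose]
  rw [hM, det_mul, det_mul, det_transpose, mul_right_comm, ← sq]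
  exact mul_le_mul_of_nonneg_left
    (det_sum_smul_vecMulVec_le _ _ _ ξ.w_nonneg ξ.w_sum fun x hx => hℓ x (ξ.mem_pts x hx))
    (sq_nonneg _)

lemma det_sum_smul_vecMulVec_row {d : ℕ} (F : Matrix (Fin d) (Fin d) ℝ) :
    (∑ i, (d : ℝ)⁻¹ • vecMulVec (F i) (F i)).det = F.det ^ 2 * (d : ℝ)⁻¹ ^ d := by
  have : ∑ i, vecMulVec (F i) (F i) = Fᵀ * F := by
    ext j k
    simp [Matrix.sum_apply, vecMulVec_apply, mul_apply]
  rw [← Finset.smul_sum, this, det_smul, det_mul, det_transpose, Fintype.card_fin]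
  ring

theorem det_infoMat_le_det_equal_weights {d : ℕ} {I : Set ℝ} {f ℓ : ℝ → Fin d → ℝ}
    {x : Fin d → ℝ} (hf : ∀ y ∈ I, f y = (of fun i => f (x i))ᵀ *ᵥ ℓ y)
    (hℓ : ∀ y ∈ I, ∑ i, ℓ y i ^ 2 ≤ 1) (ξ : Design I) :
    (infoMat (fun y => vecMulVec (f y) (f y)) ξ).det ≤
      (∑ i, (d : ℝ)⁻¹ • vecMulVec (f (x i)) (f (x i))).det :=
  (det_infoMat_le_of_lagrange hf hℓ ξ).trans_eq (det_sum_smul_vecMulVec_row _).symm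

end DOptimality

section ZeroCounting

def HasZeros (f : ℝ → ℝ) (n : ℕ) : Prop :=
  ∃ x : Fin n → ℝ, StrictMono x ∧ ∀ i, f (x i) = 0

namespace HasZeros

variable {f g f' : ℝ → ℝ} {n : ℕ}

lemma mono (hf : HasZeros f n) (hfg : ∀ t, f t = 0 → g t = 0) : HasZeros g n := by
  obtain ⟨x, hx, hz⟩ := hf
  exact ⟨x, hx, fun i => hfg _ (hz i)⟩

lemma exists_eq_zero (hf : HasZeros f (n + 1)) : ∃ t, f t = 0 := by
  obtain ⟨x, -, hz⟩ := hf
  exact ⟨x 0, hz 0⟩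

lemma of_forall_exists_Ioo {x : Fin (n + 1) → ℝ}
    (h : ∀ i : Fin n, ∃ y ∈ Ioo (x i.castSucc) (x i.succ), f y = 0) : HasZeros f n := by
  choose y hy hy0 using h
  refine ⟨y, ?_, hy0⟩
  cases n with
  | zero => exact fun i => i.elim0
  | succ n => exact Fin.strictMono_iff_lt_succ.2 fun i => (hy _).2.trans (hy i.succ).1

lemma deriv (hd : ∀ t, HasDerivAt f (f' t) t) (hf : HasZeros f (n + 1)) : HasZeros f' n := by
  obtain ⟨x, hx, hz⟩ := hf
  exact of_forall_exists_Ioo fun i => exists_hasDerivAt_eq_zero (hx i.castSucc_lt_succ)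
    (fun t _ => (hd t).continuousAt.continuousWithinAt) (by rw [hz, hz]) fun t _ => hd t

end HasZeros

lemma hasZeros_of_alternating_deriv {f f' : ℝ → ℝ} {n : ℕ} (hd : ∀ t, HasDerivAt f (f' t) t)
    {x : Fin (n + 1) → ℝ} (hx : StrictMono x)
    (halt : ∀ i : Fin n, f' (x i.castSucc) * f' (x i.succ) < 0) : HasZeros f' n := by
  refine HasZeros.of_forall_exists_Ioo (x := x) fun i => ?_
  have hd' : ∀ t ∈ Icc (x i.castSucc) (x i.succ),
      HasDerivWithinAt f (f' t) (Icc (x i.castSucc) (x i.succ)) t :=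
    fun t _ => (hd t).hasDerivWithinAt
  rcases mul_neg_iff.1 (halt i) with ⟨hpos, hneg⟩ | ⟨hneg, hpos⟩
  · exact exists_hasDerivWithinAt_eq_of_lt_of_gt (hx i.castSucc_lt_succ).le hd' hpos hneg
  · exact exists_hasDerivWithinAt_eq_of_gt_of_lt (hx i.castSucc_lt_succ).le hd' hneg hpos

lemma eq_zero_of_hasZeros_exp_add_const {c d : ℝ} (h : HasZeros (fun t => c * exp t + d) 2) :
    c = 0 ∧ d = 0 := by
  obtain ⟨y, hy⟩ := (h.deriv fun t => ((hasDerivAt_exp t).const_mul c).add_const d).exists_eq_zero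
  have hc : c = 0 := by simpa [exp_ne_zero] using hy
  obtain ⟨t, ht⟩ := h.exists_eq_zero
  exact ⟨hc, by simpa [hc] using ht⟩

lemma eq_zero_of_hasZeros_exp_add_affine {c d₀ d₁ : ℝ}
    (h : HasZeros (fun t => c * exp t + d₀ + d₁ * t) 3) : c = 0 ∧ d₀ = 0 ∧ d₁ = 0 := by
  have hd : ∀ t, HasDerivAt (fun t => c * exp t + d₀ + d₁ * t) (c * exp t + d₁) t := fun t =>
    ((((hasDerivAt_exp t).const_mul c).add_const d₀).add
      ((hasDerivAt_id' t).const_mul d₁)).congr_deriv (by ring)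
  obtain ⟨hc, hd₁⟩ := eq_zero_of_hasZeros_exp_add_const (h.deriv hd)
  obtain ⟨t, ht⟩ := h.exists_eq_zero
  exact ⟨hc, by simpa [hc, hd₁] using ht, hd₁⟩

lemma eq_zero_of_hasZeros_expQuad {c d₀ d₁ r : ℝ}
    (h : HasZeros (fun t => c + (d₀ + d₁ * t) * exp (-t) + r * exp (-t) ^ 2) 4) :
    c = 0 ∧ d₀ = 0 ∧ d₁ = 0 ∧ r = 0 := by
  have hG : HasZeros (fun t => c * exp t ^ 2 + (d₀ + d₁ * t) * exp t + r) 4 := h.mono fun t ht => by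
    have : exp t * exp (-t) = 1 := by rw [← exp_add, add_neg_cancel, exp_zero]
    linear_combination exp t ^ 2 * ht - ((d₀ + d₁ * t) * exp t + r * (1 + exp t * exp (-t))) * this
  have hG' : ∀ t, HasDerivAt (fun t => c * exp t ^ 2 + (d₀ + d₁ * t) * exp t + r)
      (2 * c * exp t ^ 2 + (d₀ + d₁ + d₁ * t) * exp t) t := fun t =>
    ((((hasDerivAt_exp t).pow 2).const_mul c).add
      ((((hasDerivAt_id' t).const_mul d₁).const_add d₀).mul (hasDerivAt_exp t))).add_const r
      |>.congr_deriv (by simp; ring)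
  have hK := (hG.deriv hG').mono fun t ht => by
    show 2 * c * exp t + (d₀ + d₁) + d₁ * t = 0
    have : exp t * (2 * c * exp t + (d₀ + d₁) + d₁ * t) = 0 := by linear_combination ht
    exact (mul_eq_zero.1 this).resolve_left (exp_ne_zero t)
  obtain ⟨hc, hd₀, hd₁⟩ := eq_zero_of_hasZeros_exp_add_affine hK
  obtain ⟨t, ht⟩ := h.exists_eq_zero
  refine ⟨by linarith, by linarith, hd₁, ?_⟩
  simpa [show c = 0 by linarith, show d₀ = 0 by linarith, hd₁, exp_ne_zero] using ht

def expQuadSpan : Submodule ℝ (ℝ → ℝ) :=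
  Submodule.span ℝ {1, fun t => exp (-t), fun t => t * exp (-t), fun t => exp (-t) ^ 2}

lemma eq_zero_of_mem_expQuadSpan {g : ℝ → ℝ} (hg : g ∈ expQuadSpan) (hz : HasZeros g 4) :
    g = 0 := by
  simp only [expQuadSpan, Submodule.mem_span_insert, Submodule.mem_span_singleton] at hg
  obtain ⟨c, -, ⟨d₀, -, ⟨d₁, -, ⟨r, rfl⟩, rfl⟩, rfl⟩, rfl⟩ := hg
  obtain ⟨rfl, rfl, rfl, rfl⟩ := eq_zero_of_hasZeros_expQuad (c := c) (d₀ := d₀) (d₁ := d₁) (r := r)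
    (hz.mono fun t ht => by simp at ht; linear_combination ht)
  simp

end ZeroCounting

section SignChanges

variable {f f' : ℝ → ℝ}

lemma exists_mem_Ioo_gt_of_hasDerivAt_pos {d x c : ℝ} (hf : HasDerivAt f d x) (hd : 0 < d)
    (hc : x < c) : ∃ y ∈ Ioo x c, f x < f y := by
  have hslope := (hasDerivAt_iff_tendsto_slope.1 hf).mono_left (nhdsGT_le_nhdsNE x)
  obtain ⟨y, hy, hyc⟩ :=
    ((hslope.eventually (eventually_gt_nhds hd)).and (Ioo_mem_nhdsGT hc)).exists
  exact ⟨y, hyc, (slope_pos_iff_of_le hyc.1.le).1 hy⟩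

lemma exists_mem_Ioo_gt_of_hasDerivAt_neg {d x c : ℝ} (hf : HasDerivAt f d x) (hd : d < 0)
    (hc : c < x) : ∃ y ∈ Ioo c x, f x < f y := by
  have hslope := (hasDerivAt_iff_tendsto_slope.1 hf).mono_left (nhdsLT_le_nhdsNE x)
  obtain ⟨y, hy, hyc⟩ :=
    ((hslope.eventually (eventually_lt_nhds hd)).and (Ioo_mem_nhdsLT hc)).exists
  exact ⟨y, hyc, (slope_neg_iff_of_le hyc.2.le).1 (slope_comm f x y ▸ hy)⟩

lemma exists_mem_Ioo_deriv_pos (hd : ∀ t, HasDerivAt f (f' t) t) {x y : ℝ} (hxy : x < y)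
    (h : f x < f y) : ∃ z ∈ Ioo x y, 0 < f' z := by
  obtain ⟨z, hz, hslope⟩ := exists_hasDerivAt_eq_slope f f' hxy
    (fun s _ => (hd s).continuousAt.continuousWithinAt) fun s _ => hd s
  exact ⟨z, hz, hslope ▸ div_pos (sub_pos.2 h) (sub_pos.2 hxy)⟩

lemma exists_mem_Ioo_deriv_neg (hd : ∀ t, HasDerivAt f (f' t) t) {x y : ℝ} (hxy : x < y)
    (h : f y < f x) : ∃ z ∈ Ioo x y, f' z < 0 := by
  obtain ⟨z, hz, hslope⟩ := exists_hasDerivAt_eq_slope f f' hxy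
    (fun s _ => (hd s).continuousAt.continuousWithinAt) fun s _ => hd s
  exact ⟨z, hz, hslope ▸ div_neg_of_neg_of_pos (sub_neg.2 h) (sub_pos.2 hxy)⟩

lemma hasZeros_deriv_of_zigzag (hd : ∀ t, HasDerivAt f (f' t) t) {n : ℕ}
    {x : Fin (n + 2) → ℝ} (hx : StrictMono x)
    (hzig : ∀ i : Fin (n + 1), (-1) ^ (i : ℕ) * (f (x i.succ) - f (x i.castSucc)) < 0) :
    HasZeros f' n := by
  have : ∀ i : Fin (n + 1), ∃ w ∈ Ioo (x i.castSucc) (x i.succ), (-1) ^ (i : ℕ) * f' w < 0 := by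
    intro i
    obtain ⟨w, hw, hslope⟩ := exists_hasDerivAt_eq_slope f f' (hx i.castSucc_lt_succ)
      (fun t _ => (hd t).continuousAt.continuousWithinAt) fun t _ => hd t
    refine ⟨w, hw, ?_⟩
    rw [hslope, mul_div_assoc']
    exact div_neg_of_neg_of_pos (hzig i) (sub_pos.2 (hx i.castSucc_lt_succ))
  choose w hw hsign using this
  refine hasZeros_of_alternating_deriv hd
    (Fin.strictMono_iff_lt_succ.2 fun i => (hw _).2.trans (hw i.succ).1) fun i => ?_
  have h₁ := hsign i.castSucc
  have h₂ := hsign i.succ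
  simp only [Fin.val_castSucc, Fin.val_succ, pow_succ] at h₁ h₂
  have hsq : (-1 : ℝ) ^ (i : ℕ) * (-1) ^ (i : ℕ) = 1 := by rw [← mul_pow]; norm_num
  nlinarith [mul_pos_of_neg_of_neg h₁ h₂]

theorem nonneg_of_three_zeros {H Φ Φ' : ℝ → ℝ} (hH : ∀ t, HasDerivAt H (Φ t) t)
    (hΦ : ∀ t, HasDerivAt Φ (Φ' t) t) (hΦ' : ¬HasZeros Φ' 4) {a m b : ℝ} (ham : a < m)
    (hmb : m < b) (Ha : H a = 0) (Hm : H m = 0) (Hb : H b = 0) (Φa : 0 < Φ a) (Φm : Φ m = 0)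
    (Φb : Φ b < 0) {t : ℝ} (ht : t ∈ Icc a b) : 0 ≤ H t := by
  -- `H` is positive just after `a` and just before `b`, so a negative value in between makes the
  -- values of `Φ` zigzag along six points (one of them `m`), and `Φ'` changes sign four times.
  by_contra! hHt
  have hat : a < t := ht.1.lt_of_ne (by rintro rfl; linarith)
  have htb : t < b := ht.2.lt_of_ne (by rintro rfl; linarith)
  obtain ⟨q, hq, Hq⟩ := exists_mem_Ioo_gt_of_hasDerivAt_pos (hH a) Φa (lt_min hat ham)
  obtain ⟨p, hp, Hp⟩ := exists_mem_Ioo_gt_of_hasDerivAt_neg (hH b) Φb (max_lt htb hmb)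
  rw [mem_Ioo, lt_min_iff] at hq
  rw [mem_Ioo, max_lt_iff] at hp
  obtain ⟨haq, hqt, hqm⟩ := hq
  obtain ⟨⟨htp, hmp⟩, hpb⟩ := hp
  rw [Ha] at Hq
  rw [Hb] at Hp
  rcases lt_or_gt_of_ne (show t ≠ m by rintro rfl; linarith) with htm | hmt
  · obtain ⟨s₁, ⟨hqs₁, hs₁t⟩, Φs₁⟩ := exists_mem_Ioo_deriv_neg hH hqt (by linarith)
    obtain ⟨s₂, ⟨hts₂, hs₂m⟩, Φs₂⟩ := exists_mem_Ioo_deriv_pos hH htm (by linarith)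
    obtain ⟨r, ⟨hmr, hrp⟩, Φr⟩ := exists_mem_Ioo_deriv_pos hH hmp (by linarith)
    refine hΦ' (hasZeros_deriv_of_zigzag hΦ (x := ![a, s₁, s₂, m, r, b]) ?_ ?_)
    · refine Fin.strictMono_iff_lt_succ.2 fun i => ?_
      fin_cases i <;> simp <;> linarith
    · intro i
      fin_cases i <;> simp <;> linarith
  · obtain ⟨r, ⟨hqr, hrm⟩, Φr⟩ := exists_mem_Ioo_deriv_neg hH hqm (by linarith)
    obtain ⟨s₁, ⟨hms₁, hs₁t⟩, Φs₁⟩ := exists_mem_Ioo_deriv_neg hH hmt (by linarith)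
    obtain ⟨s₂, ⟨hts₂, hs₂p⟩, Φs₂⟩ := exists_mem_Ioo_deriv_pos hH htp (by linarith)
    refine hΦ' (hasZeros_deriv_of_zigzag hΦ (x := ![a, r, m, s₁, s₂, b]) ?_ ?_)
    · refine Fin.strictMono_iff_lt_succ.2 fun i => ?_
      fin_cases i <;> simp <;> linarith
    · intro i
      fin_cases i <;> simp <;> linarith

end SignChanges

section AffExp

noncomputable def affExp (α β γ t : ℝ) : ℝ := α + β * t + γ * exp (-t)

lemma hasDerivAt_affExp (α β γ t : ℝ) : HasDerivAt (affExp α β γ) (affExp β 0 (-γ) t) t :=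
  (((hasDerivAt_id' t).const_mul β).const_add α |>.add
    (((hasDerivAt_neg' t).exp).const_mul γ)).congr_deriv (by simp [affExp])

lemma affExp_deriv_sq_add_mul_mem (α β γ : ℝ) :
    (fun t => affExp β 0 (-γ) t ^ 2 + affExp α β γ t * affExp 0 0 γ t) ∈ expQuadSpan := by
  have h : (fun t => affExp β 0 (-γ) t ^ 2 + affExp α β γ t * affExp 0 0 γ t) =
      β ^ 2 • (1 : ℝ → ℝ) + (α * γ - 2 * β * γ) • (fun t => exp (-t)) +
        (β * γ) • (fun t => t * exp (-t)) + (2 * γ ^ 2) • (fun t => exp (-t) ^ 2) := by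
    ext t
    simp only [affExp, Pi.add_apply, Pi.smul_apply, Pi.one_apply, smul_eq_mul]
    ring
  rw [h]
  refine add_mem (add_mem (add_mem ?_ ?_) ?_) ?_ <;>
    exact Submodule.smul_mem _ _ (Submodule.subset_span (by simp))

theorem sum_sq_affExp_le {ι : Type*} [Fintype ι] (α β γ : ι → ℝ) {C a m b : ℝ} (ham : a < m)
    (hmb : m < b) (hQa : ∑ j, affExp (α j) (β j) (γ j) a ^ 2 = C)
    (hQm : ∑ j, affExp (α j) (β j) (γ j) m ^ 2 = C)
    (hQb : ∑ j, affExp (α j) (β j) (γ j) b ^ 2 = C)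
    (hPa : ∑ j, affExp (α j) (β j) (γ j) a * affExp (β j) 0 (-γ j) a < 0)
    (hPm : ∑ j, affExp (α j) (β j) (γ j) m * affExp (β j) 0 (-γ j) m = 0)
    (hPb : 0 < ∑ j, affExp (α j) (β j) (γ j) b * affExp (β j) 0 (-γ j) b)
    {t : ℝ} (ht : t ∈ Icc a b) : ∑ j, affExp (α j) (β j) (γ j) t ^ 2 ≤ C := by
  set u := fun j => affExp (α j) (β j) (γ j)
  set u' := fun j => affExp (β j) 0 (-γ j)
  set Φ : ℝ → ℝ := fun t => -2 * ∑ j, u j t * u' j t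
  set Φ' : ℝ → ℝ := fun t => -2 * ∑ j, (u' j t ^ 2 + u j t * affExp 0 0 (γ j) t)
  have hH : ∀ t, HasDerivAt (fun t => C - ∑ j, u j t ^ 2) (Φ t) t := fun t =>
    ((HasDerivAt.fun_sum fun j _ => (hasDerivAt_affExp _ _ _ t).pow 2).const_sub C).congr_deriv
      (by simp only [Φ, Finset.mul_sum, ← Finset.sum_neg_distrib]
          exact Finset.sum_congr rfl fun j _ => by norm_num; ring)
  have hΦ : ∀ t, HasDerivAt Φ (Φ' t) t := fun t =>
    ((HasDerivAt.fun_sum fun j _ => (hasDerivAt_affExp _ _ _ t).mul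
      (hasDerivAt_affExp _ _ _ t)).const_mul (-2)).congr_deriv
      (by simp only [Φ', Finset.mul_sum]
          exact Finset.sum_congr rfl fun j _ => by simp only [neg_neg]; ring)
  have hΦ' : ¬HasZeros Φ' 4 := by
    intro hz
    have hmem : Φ' ∈ expQuadSpan := by
      have : Φ' = (-2 : ℝ) • ∑ j, fun t => u' j t ^ 2 + u j t * affExp 0 0 (γ j) t := by
        ext t
        simp [Φ', Finset.sum_apply]
      rw [this]
      exact Submodule.smul_mem _ _
        (Submodule.sum_mem _ fun j _ => affExp_deriv_sq_add_mul_mem _ _ _)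
    obtain ⟨c, -, hc⟩ := exists_hasDerivAt_eq_slope Φ Φ' (ham.trans hmb)
      (fun s _ => (hΦ s).continuousAt.continuousWithinAt) fun s _ => hΦ s
    rw [eq_zero_of_mem_expQuadSpan hmem hz, Pi.zero_apply, eq_comm, div_eq_zero_iff] at hc
    rcases hc with hc | hc
    · simp only [Φ] at hc
      linarith
    · linarith
  have := nonneg_of_three_zeros hH hΦ hΦ' ham hmb (by simp only [u, hQa, sub_self])
    (by simp only [u, hQm, sub_self]) (by simp only [u, hQb, sub_self])
    (by simp only [Φ]; linarith) (by simp only [Φ, u, u', hPm, mul_zero])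
    (by simp only [Φ]; linarith) ht
  linarith

end AffExp

section Nodes

noncomputable def expReg (t : ℝ) : Fin 3 → ℝ := ![1, t, exp (-t)]

noncomputable def expReg' (t : ℝ) : Fin 3 → ℝ := ![0, 1, -exp (-t)]

noncomputable def nodeMatrix (s : Fin 3 → ℝ) : Matrix (Fin 3) (Fin 3) ℝ := of fun k => expReg (s k)

lemma cramer_expReg_apply (A : Matrix (Fin 3) (Fin 3) ℝ) (t : ℝ) (j : Fin 3) :
    A.cramer (expReg t) j =
      affExp (A.cramer (Pi.single 0 1) j) (A.cramer (Pi.single 1 1) j)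
        (A.cramer (Pi.single 2 1) j) t := by
  have : expReg t = Pi.single 0 1 + t • Pi.single 1 1 + exp (-t) • Pi.single 2 1 := by
    ext i; fin_cases i <;> simp [expReg]
  rw [this, map_add, map_add, map_smul, map_smul]
  simp [affExp, mul_comm]

lemma cramer_expReg'_apply (A : Matrix (Fin 3) (Fin 3) ℝ) (t : ℝ) (j : Fin 3) :
    A.cramer (expReg' t) j =
      affExp (A.cramer (Pi.single 1 1) j) 0 (-A.cramer (Pi.single 2 1) j) t := by
  have : expReg' t = Pi.single 1 1 + (-exp (-t)) • Pi.single 2 1 := by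
    ext i; fin_cases i <;> simp [expReg']
  rw [this, map_add, map_smul]
  simp [affExp, mul_comm]

/-- By Cramer's rule `(nodeMatrix s)ᵀ.cramer (expReg t)` is `det (nodeMatrix s)` times the vector of
Lagrange functions of the nodes `s` at `t`, and `((nodeMatrix s).updateRow k (expReg' (s k))).det`
is the derivative of its `k`-th entry at `s k`. -/
theorem sum_sq_cramer_expReg_le {s : Fin 3 → ℝ} (h01 : s 0 < s 1) (h12 : s 1 < s 2)
    (h0 : (nodeMatrix s).det * ((nodeMatrix s).updateRow 0 (expReg' (s 0))).det < 0)
    (h1 : ((nodeMatrix s).updateRow 1 (expReg' (s 1))).det = 0)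
    (h2 : 0 < (nodeMatrix s).det * ((nodeMatrix s).updateRow 2 (expReg' (s 2))).det)
    {t : ℝ} (ht : t ∈ Icc (s 0) (s 2)) :
    ∑ j, (nodeMatrix s)ᵀ.cramer (expReg t) j ^ 2 ≤ (nodeMatrix s).det ^ 2 := by
  set G := nodeMatrix s
  have hQ : ∀ k, ∑ j, Gᵀ.cramer (expReg (s k)) j ^ 2 = G.det ^ 2 := fun k => by
    rw [show expReg (s k) = G k from rfl, cramer_transpose_row_self]
    simp [Pi.single_apply]
  have hP : ∀ k, ∑ j, Gᵀ.cramer (expReg (s k)) j * Gᵀ.cramer (expReg' (s k)) j =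
      G.det * (G.updateRow k (expReg' (s k))).det := fun k => by
    rw [show expReg (s k) = G k from rfl, cramer_transpose_row_self, ← cramer_transpose_apply]
    simp [Pi.single_apply]
  simp only [cramer_expReg_apply, cramer_expReg'_apply] at hQ hP ⊢
  exact sum_sq_affExp_le _ _ _ h01 h12 (hQ 0) (hQ 1) (hQ 2) (hP 0 ▸ h0)
    (by rw [hP 1, h1, mul_zero]) (hP 2 ▸ h2) ht

end Nodes

section InteriorNode

/-- The node `m` with `e^{-m} T = 1 - e^{-T}`, the condition for the middle Lagrange function to be
stationary at `m`. -/
noncomputable def interiorNode (T : ℝ) : ℝ := log (T / (1 - exp (-T)))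

noncomputable def tNodes (T : ℝ) : Fin 3 → ℝ := ![0, interiorNode T, T]

noncomputable def lagrange (T t : ℝ) : Fin 3 → ℝ :=
  (nodeMatrix (tNodes T)).det⁻¹ • (nodeMatrix (tNodes T))ᵀ.cramer (expReg t)

lemma mul_exp_neg_lt_one_sub_exp_neg {x : ℝ} (hx : x ≠ 0) : x * exp (-x) < 1 - exp (-x) := by
  have h : exp x * exp (-x) = 1 := by rw [← exp_add, add_neg_cancel, exp_zero]
  nlinarith [add_one_lt_exp hx, exp_pos (-x)]

variable {T : ℝ}

lemma exp_neg_interiorNode (hT : 0 < T) : exp (-interiorNode T) = (1 - exp (-T)) / T := by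
  have : 0 < 1 - exp (-T) := by simpa using exp_lt_one_iff.2 (neg_neg_of_pos hT)
  rw [interiorNode, Real.exp_neg, exp_log (by positivity), inv_div]

lemma exp_neg_interiorNode_mul (hT : 0 < T) : exp (-interiorNode T) * T = 1 - exp (-T) := by
  rw [exp_neg_interiorNode hT, div_mul_cancel₀ _ hT.ne']

lemma exp_neg_lt_exp_neg_interiorNode (hT : 0 < T) : exp (-T) < exp (-interiorNode T) := by
  rw [exp_neg_interiorNode hT, lt_div_iff₀ hT]
  linarith [mul_exp_neg_lt_one_sub_exp_neg hT.ne']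

lemma exp_neg_interiorNode_lt_one (hT : 0 < T) : exp (-interiorNode T) < 1 := by
  rw [exp_neg_interiorNode hT, div_lt_one hT]
  linarith [add_one_lt_exp (neg_ne_zero.2 hT.ne')]

lemma interiorNode_pos (hT : 0 < T) : 0 < interiorNode T := by
  simpa using exp_lt_one_iff.1 (exp_neg_interiorNode_lt_one hT)

lemma interiorNode_lt (hT : 0 < T) : interiorNode T < T := by
  simpa using exp_lt_exp.1 (exp_neg_lt_exp_neg_interiorNode hT)

lemma det_nodeMatrix_tNodes_pos (hT : 0 < T) : 0 < (nodeMatrix (tNodes T)).det := by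
  have hμT := exp_neg_interiorNode_mul hT
  have hmμ := mul_exp_neg_lt_one_sub_exp_neg (interiorNode_pos hT).ne'
  have : (nodeMatrix (tNodes T)).det =
      T * (1 - exp (-interiorNode T) - interiorNode T * exp (-interiorNode T)) := by
    simp [tNodes, nodeMatrix, expReg, det_fin_three]
    linear_combination interiorNode T * hμT
  rw [this]
  exact mul_pos hT (by linarith)

theorem sum_sq_lagrange_le (hT : 0 < T) {t : ℝ} (ht : t ∈ Icc 0 T) :
    ∑ i, lagrange T t i ^ 2 ≤ 1 := by
  have hdet := det_nodeMatrix_tNodes_pos hT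
  have hm := interiorNode_pos hT
  have hmT := interiorNode_lt hT
  have hμT := exp_neg_interiorNode_mul hT
  have haμ := exp_neg_lt_exp_neg_interiorNode hT
  have hμ1 := exp_neg_interiorNode_lt_one hT
  have hmμ := mul_exp_neg_lt_one_sub_exp_neg hm.ne'
  set G := nodeMatrix (tNodes T)
  set m := interiorNode T
  have hd₀ : (G.updateRow 0 (expReg' (tNodes T 0))).det = exp (-m) - exp (-T) - T + m := by
    simp [G, m, tNodes, nodeMatrix, expReg, expReg', det_fin_three]; ring
  have hd₁ : (G.updateRow 1 (expReg' (tNodes T 1))).det = exp (-T) + exp (-m) * T - 1 := by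
    simp [G, m, tNodes, nodeMatrix, expReg, expReg', det_fin_three]
  have hd₂ : (G.updateRow 2 (expReg' (tNodes T 2))).det = 1 - exp (-m) - m * exp (-T) := by
    simp [G, m, tNodes, nodeMatrix, expReg, expReg', det_fin_three]; ring
  have hm₀ : m < T + exp (-T) - exp (-m) := by
    have : (T + exp (-T) - exp (-m)) * exp (-m) =
        1 - exp (-m) + (exp (-m) - exp (-T)) * (1 - exp (-m)) := by
      linear_combination hμT
    refine lt_of_mul_lt_mul_right ?_ (exp_pos (-m)).le
    nlinarith [mul_pos (sub_pos.2 haμ) (sub_pos.2 hμ1)]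
  have hsq := sum_sq_cramer_expReg_le (s := tNodes T) (by simpa [tNodes] using hm)
    (by simpa [tNodes] using hmT)
    (mul_neg_of_pos_of_neg hdet (by rw [hd₀]; linarith)) (by rw [hd₁]; linear_combination hμT)
    (mul_pos hdet (by rw [hd₂]; nlinarith [mul_lt_mul_of_pos_left haμ hm]))
    (by simpa [tNodes] using ht)
  simp only [lagrange, Pi.smul_apply, smul_eq_mul, mul_pow, ← Finset.mul_sum]
  rw [inv_pow, inv_mul_le_one₀ (by positivity)]
  exact hsq

lemma expReg_eq_transpose_mulVec_lagrange (hT : 0 < T) (t : ℝ) :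
    expReg t = (nodeMatrix (tNodes T))ᵀ *ᵥ lagrange T t := by
  rw [lagrange, mulVec_smul, mulVec_cramer, det_transpose, smul_smul,
    inv_mul_cancel₀ (det_nodeMatrix_tNodes_pos hT).ne', one_smul]

end InteriorNode

lemma fLogLin_eq_mulVec_expReg {θ₂ θ₃ c x : ℝ} (hc : 0 < c) (hx : 0 < x + θ₃) :
    fLogLin θ₂ θ₃ x = !![1, 0, 0; log c, 1, 0; 0, 0, θ₂ / c] *ᵥ expReg (log ((x + θ₃) / c)) := by
  ext i
  fin_cases i <;> simp [fLogLin, expReg, log_div hx.ne' hc.ne', exp_sub, exp_log hc, exp_log hx]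
  field_simp

section InteriorPoint

variable {θ₃ L U : ℝ}

noncomputable def interiorPoint (θ₃ L U : ℝ) : ℝ :=
  (L + θ₃) * exp (interiorNode (log ((U + θ₃) / (L + θ₃)))) - θ₃

lemma log_interiorPoint (hL : 0 < L + θ₃) :
    log ((interiorPoint θ₃ L U + θ₃) / (L + θ₃)) = interiorNode (log ((U + θ₃) / (L + θ₃))) := by
  rw [interiorPoint, sub_add_cancel, mul_div_cancel_left₀ _ hL.ne', log_exp]

lemma interiorPoint_mem_Ioo (hL : 0 < L + θ₃) (hLU : L < U) :
    interiorPoint θ₃ L U ∈ Ioo L U := by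
  have hT : 0 < log ((U + θ₃) / (L + θ₃)) := log_pos ((one_lt_div hL).2 (by linarith))
  have h0 := exp_lt_exp.2 (interiorNode_pos hT)
  have hT' := exp_lt_exp.2 (interiorNode_lt hT)
  rw [exp_zero] at h0
  rw [exp_log (div_pos (by linarith) hL), lt_div_iff₀ hL] at hT'
  constructor <;> simp only [interiorPoint] <;> nlinarith

lemma interiorPoint_eq (hL : 0 < L + θ₃) (hLU : L < U) :
    interiorPoint θ₃ L U =
      (L + θ₃) * (U + θ₃) / (U - L) * log ((U + θ₃) / (L + θ₃)) - θ₃ := by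
  have hU : 0 < U + θ₃ := by linarith
  have hT : 0 < log ((U + θ₃) / (L + θ₃)) := log_pos ((one_lt_div hL).2 (by linarith))
  have ha : exp (-log ((U + θ₃) / (L + θ₃))) = (L + θ₃) / (U + θ₃) := by
    rw [Real.exp_neg, exp_log (div_pos hU hL), inv_div]
  rw [interiorPoint, interiorNode, ha, exp_log]
  · field_simp
    ring
  · exact div_pos hT (by rw [sub_pos, div_lt_one hU]; linarith)

end InteriorPoint

theorem logLin_det_infoMat_le {θ₂ θ₃ L U : ℝ} (hL : 0 < L + θ₃) (hLU : L < U)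
    (ξ : Design (Icc L U)) :
    (infoMat (logLinInfo θ₂ θ₃) ξ).det ≤
      (∑ i, (3 : ℝ)⁻¹ • logLinInfo θ₂ θ₃ (![L, interiorPoint θ₃ L U, U] i)).det := by
  set T := log ((U + θ₃) / (L + θ₃))
  have hT : 0 < T := log_pos ((one_lt_div hL).2 (by linarith))
  set A : Matrix (Fin 3) (Fin 3) ℝ := !![1, 0, 0; log (L + θ₃), 1, 0; 0, 0, θ₂ / (L + θ₃)]
  set τ : ℝ → ℝ := fun x => log ((x + θ₃) / (L + θ₃))
  have hf : ∀ x ∈ Icc L U, fLogLin θ₂ θ₃ x = A *ᵥ expReg (τ x) := fun x hx =>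
    fLogLin_eq_mulVec_expReg hL (by linarith [hx.1])
  have hτ : ∀ x ∈ Icc L U, τ x ∈ Icc 0 T := fun x hx =>
    ⟨log_nonneg ((one_le_div hL).2 (by linarith [hx.1])),
      log_le_log (div_pos (by linarith [hx.1]) hL) (by gcongr; exact hx.2)⟩
  have hnodes : (of fun i => fLogLin θ₂ θ₃ (![L, interiorPoint θ₃ L U, U] i)) =
      nodeMatrix (tNodes T) * Aᵀ := by
    obtain ⟨hxL, hxU⟩ := interiorPoint_mem_Ioo hL hLU
    rw [← of_mulVec_eq_mul_transpose]
    refine congrArg of (funext fun i => ?_)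
    fin_cases i
    · show fLogLin θ₂ θ₃ L = A *ᵥ expReg 0
      simp [hf L ⟨le_rfl, hLU.le⟩, τ]
    · show fLogLin θ₂ θ₃ (interiorPoint θ₃ L U) = A *ᵥ expReg (interiorNode T)
      rw [hf _ ⟨hxL.le, hxU.le⟩, ← log_interiorPoint hL]
    · show fLogLin θ₂ θ₃ U = A *ᵥ expReg T
      rw [hf U ⟨hLU.le, le_rfl⟩]
  exact_mod_cast det_infoMat_le_det_equal_weights (ℓ := fun x => lagrange T (τ x))
    (fun x hx => by rw [hnodes, transpose_mul, transpose_transpose, ← mulVec_mulVec,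
      ← expReg_eq_transpose_mulVec_lagrange hT, hf x hx])
    (fun x hx => sum_sq_lagrange_le hT (hτ x hx)) ξ

theorem stmt10_general (θ₂ θ₃ : ℝ) (hθ₃ : 0 < θ₃) (L U : ℝ)
    (hL : 0 < L) (hLU : L < U) :
    (∀ ξ : Design (Set.Icc L U),
      (infoMat (logLinInfo θ₂ θ₃) ξ).det ≤
        ((1 / 3 : ℝ) • logLinInfo θ₂ θ₃ L +
          (1 / 3 : ℝ) • logLinInfo θ₂ θ₃ ((L + θ₃) * (U + θ₃) / (U - L) * Real.log ((U + θ₃) / (L + θ₃)) - θ₃) +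
          (1 / 3 : ℝ) • logLinInfo θ₂ θ₃ U).det) ∧
    L < ((L + θ₃) * (U + θ₃) / (U - L) * Real.log ((U + θ₃) / (L + θ₃)) - θ₃) ∧
    ((L + θ₃) * (U + θ₃) / (U - L) * Real.log ((U + θ₃) / (L + θ₃)) - θ₃) < U := by
  have hLθ : 0 < L + θ₃ := by linarith
  rw [← interiorPoint_eq hLθ hLU]
  refine ⟨fun ξ => ?_, interiorPoint_mem_Ioo hLθ hLU⟩
  simpa [Fin.sum_univ_three, add_assoc] using logLin_det_infoMat_le (θ₂ := θ₂) hLθ hLU ξ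

/-- the design with weight 1/3 at each of `L`, `x_l*`, `U` is D-optimal
for the log-linear model, and `L < x_l* < U`. -/
theorem stmt10 (θ₁ θ₂ θ₃ : ℝ) (hθ₂ : 0 < θ₂) (hθ₃ : 0 < θ₃) (L U : ℝ)
    (hL : 0 < L) (hLU : L < U) :
    (∀ ξ : Design (Set.Icc L U),
      (infoMat (logLinInfo θ₂ θ₃) ξ).det ≤
        ((1 / 3 : ℝ) • logLinInfo θ₂ θ₃ L +
          (1 / 3 : ℝ) • logLinInfo θ₂ θ₃ ((L + θ₃) * (U + θ₃) / (U - L) * Real.log ((U + θ₃) / (L + θ₃)) - θ₃) +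
          (1 / 3 : ℝ) • logLinInfo θ₂ θ₃ U).det) ∧
    L < ((L + θ₃) * (U + θ₃) / (U - L) * Real.log ((U + θ₃) / (L + θ₃)) - θ₃) ∧
    ((L + θ₃) * (U + θ₃) / (U - L) * Real.log ((U + θ₃) / (L + θ₃)) - θ₃) < U :=
  stmt10_general θ₂ θ₃ hθ₃ L U hL hLU
end

section
/- Consider the log-linear model with parameters θ = (θ₁, θ₂, θ₃), θ₂ > 0, θ₃ > 0, on the design region [L,U] with 0 < L < U. Let x_l* = ((L+θ₃)(U+θ₃)/(U−L)) · log((U+θ₃)/(L+θ₃)) − θ₃ and ω_l* = (log(x_l*+θ₃) − log(U+θ₃)) / (2(log(L+θ₃) − log(U+θ₃))). The design ξ* that puts weight ω_l* at L, weight 1/2 at x_l*, and weight 1/2 − ω_l* at U has invertible information matrix M_{ξ*}, and for every design ξ on [L,U] whose information matrix M_ξ is invertible, (M_{ξ*}^{−1})₃₃ ≤ (M_ξ^{−1})₃₃; that is, ξ* is e₃-optimal (c-optimal for the parameter θ₃). -/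
/-!
Put `a = L + θ₃`, `b = U + θ₃`, `t = x_l* + θ₃` and `h(s) = log s + t / s`; the choice of `x_l*` is
exactly `h(a) = h(b)`. As a function of `1 / s`, `h` is convex, so it is at most `h(a)` on `[a, b]`,
and its minimum `log t + 1` is attained at `s = t`. Hence
`ψ(x) = 1 + 2 (h(x + θ₃) - h(a)) / (h(a) - h(t))`, which is of the form `f(x) ⬝ᵥ u`, satisfies
`|ψ| ≤ 1` on `[L, U]`, `ψ = 1` at `L` and `U`, and `ψ = -1` at `x_l*`. The weight `ω_l*` makes
`M_{ξ*} u` a multiple of `e₃`, which gives `(M_{ξ*}⁻¹)₃₃ = u₃²`. For any design `ξ`, Cauchy–Schwarz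
for the form `M_ξ` gives `u₃² = (uᵀ M_ξ M_ξ⁻¹ e₃)² ≤ (uᵀ M_ξ u) (M_ξ⁻¹)₃₃ ≤ (M_ξ⁻¹)₃₃`.
-/

open Real Matrix Set

theorem dotProduct_inv_mulVec_eq_sq {K n : Type*} [Field K] [Fintype n] [DecidableEq n]
    {M : Matrix n n K} (hM : IsUnit M.det) {u c : n → K} {κ : K} (hMu : M *ᵥ u = κ • c)
    (huMu : u ⬝ᵥ (M *ᵥ u) = 1) : c ⬝ᵥ (M⁻¹ *ᵥ c) = (u ⬝ᵥ c) ^ 2 := by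
  rw [hMu, dotProduct_smul, smul_eq_mul] at huMu
  have hinv : M⁻¹ *ᵥ c = (u ⬝ᵥ c) • u := by
    have : M⁻¹ *ᵥ (M *ᵥ u) = u := by simp [M.nonsing_inv_mul hM]
    rw [hMu, Matrix.mulVec_smul] at this
    calc M⁻¹ *ᵥ c = ((u ⬝ᵥ c) * κ) • M⁻¹ *ᵥ c := by rw [mul_comm, huMu, one_smul]
      _ = (u ⬝ᵥ c) • u := by rw [← smul_smul, this]
  rw [hinv, dotProduct_smul, smul_eq_mul, dotProduct_comm, sq]

theorem det_smul_vecMulVec_add_three {R : Type*} [CommRing R] (c₁ c₂ c₃ : R)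
    (v₁ v₂ v₃ : Fin 3 → R) :
    (c₁ • vecMulVec v₁ v₁ + c₂ • vecMulVec v₂ v₂ + c₃ • vecMulVec v₃ v₃).det =
      c₁ * c₂ * c₃ * (Matrix.of ![v₁, v₂, v₃]).det ^ 2 := by
  rw [det_fin_three, det_fin_three]
  simp [vecMulVec_apply]
  ring

theorem smul_vecMulVec_add_three_mulVec {R n : Type*} [CommSemiring R] [Fintype n]
    (c₁ c₂ c₃ : R) (v₁ v₂ v₃ u : n → R) :
    (c₁ • vecMulVec v₁ v₁ + c₂ • vecMulVec v₂ v₂ + c₃ • vecMulVec v₃ v₃) *ᵥ u =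
      (c₁ * (v₁ ⬝ᵥ u)) • v₁ + (c₂ * (v₂ ⬝ᵥ u)) • v₂ + (c₃ * (v₃ ⬝ᵥ u)) • v₃ := by
  simp [add_mulVec, smul_mulVec, vecMulVec_mulVec, smul_smul]

section Elfving

variable {d : ℕ} {I : Set ℝ} (f : ℝ → Fin d → ℝ) (ξ : Design I)

theorem dotProduct_infoMat_mulVec (z w : Fin d → ℝ) :
    z ⬝ᵥ (infoMat (fun x => vecMulVec (f x) (f x)) ξ *ᵥ w) =
      ∑ x ∈ ξ.pts, ξ.w x * ((f x ⬝ᵥ z) * (f x ⬝ᵥ w)) := by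
  simp only [infoMat, Matrix.sum_mulVec, dotProduct_sum, Matrix.smul_mulVec, dotProduct_smul,
    vecMulVec_mulVec, smul_eq_mul]
  refine Finset.sum_congr rfl fun x _ => ?_
  simp [dotProduct_comm z]

theorem sq_dotProduct_le_dotProduct_inv_mulVec {u : Fin d → ℝ}
    (hu : ∀ x ∈ I, (f x ⬝ᵥ u) ^ 2 ≤ 1) (c : Fin d → ℝ)
    (hM : IsUnit (infoMat (fun x => vecMulVec (f x) (f x)) ξ).det) :
    (u ⬝ᵥ c) ^ 2 ≤ c ⬝ᵥ ((infoMat (fun x => vecMulVec (f x) (f x)) ξ)⁻¹ *ᵥ c) := by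
  set M := infoMat (fun x => vecMulVec (f x) (f x)) ξ
  set v := M⁻¹ *ᵥ c
  have hMv : M *ᵥ v = c := by simp [v, M.mul_nonsing_inv hM]
  have hvv : c ⬝ᵥ v = ∑ x ∈ ξ.pts, ξ.w x * (f x ⬝ᵥ v) ^ 2 := by
    rw [dotProduct_comm, ← hMv, dotProduct_infoMat_mulVec]
    simp only [sq]
  have huu : ∑ x ∈ ξ.pts, ξ.w x * (f x ⬝ᵥ u) ^ 2 ≤ 1 := by
    rw [← ξ.w_sum]
    exact Finset.sum_le_sum fun x hx =>
      mul_le_of_le_one_right (ξ.w_nonneg x hx) (hu x (ξ.mem_pts x hx))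
  have hv0 : 0 ≤ c ⬝ᵥ v := hvv ▸ Finset.sum_nonneg fun x hx =>
    mul_nonneg (ξ.w_nonneg x hx) (sq_nonneg _)
  calc (u ⬝ᵥ c) ^ 2 = (∑ x ∈ ξ.pts, ξ.w x * ((f x ⬝ᵥ u) * (f x ⬝ᵥ v))) ^ 2 := by
        rw [← dotProduct_infoMat_mulVec, hMv]
    _ ≤ (∑ x ∈ ξ.pts, ξ.w x * (f x ⬝ᵥ u) ^ 2) * (c ⬝ᵥ v) := by
        rw [hvv]
        refine Finset.sum_sq_le_sum_mul_sum_of_sq_le_mul _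
          (fun x hx => mul_nonneg (ξ.w_nonneg x hx) (sq_nonneg _))
          (fun x hx => mul_nonneg (ξ.w_nonneg x hx) (sq_nonneg _)) fun x _ => le_of_eq ?_
        ring
    _ ≤ c ⬝ᵥ v := mul_le_of_le_one_left hv0 huu

theorem dotProduct_inv_mulVec_le_of_certificate {Mstar : Matrix (Fin d) (Fin d) ℝ}
    (hMstar : IsUnit Mstar.det) {u c : Fin d → ℝ} {κ : ℝ} (hMu : Mstar *ᵥ u = κ • c)
    (huMu : u ⬝ᵥ (Mstar *ᵥ u) = 1) (hu : ∀ x ∈ I, (f x ⬝ᵥ u) ^ 2 ≤ 1)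
    (hξ : IsUnit (infoMat (fun x => vecMulVec (f x) (f x)) ξ).det) :
    c ⬝ᵥ (Mstar⁻¹ *ᵥ c) ≤ c ⬝ᵥ ((infoMat (fun x => vecMulVec (f x) (f x)) ξ)⁻¹ *ᵥ c) :=
  dotProduct_inv_mulVec_eq_sq hMstar hMu huMu ▸ sq_dotProduct_le_dotProduct_inv_mulVec f ξ hu c hξ

end Elfving

theorem log_add_div_le_of_mem_Icc {a b t s : ℝ} (ha : 0 < a) (ht : 0 ≤ t)
    (hbal : log b + t / b = log a + t / a) (hs : s ∈ Icc a b) :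
    log s + t / s ≤ log a + t / a := by
  have hconv : ConvexOn ℝ (Ioi 0) fun y : ℝ => t * y - log y :=
    ((convexOn_id (convex_Ioi 0)).smul ht).sub strictConcaveOn_log_Ioi.concaveOn
  have hb : 0 < b := ha.trans_le (hs.1.trans hs.2)
  have key := hconv.le_on_segment (x := b⁻¹) (y := a⁻¹) (z := s⁻¹) (inv_pos.2 hb) (inv_pos.2 ha)
    (by rw [segment_eq_Icc (inv_anti₀ ha (hs.1.trans hs.2))]
        exact ⟨inv_anti₀ (ha.trans_le hs.1) hs.2, inv_anti₀ ha hs.1⟩)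
  simp only [log_inv, ← div_eq_mul_inv, sub_neg_eq_add] at key
  rw [add_comm (t / b), hbal, add_comm (t / a), max_self, add_comm] at key
  exact key

theorem log_add_one_le_log_add_div {s t : ℝ} (hs : 0 < s) (ht : 0 < t) :
    log t + 1 ≤ log s + t / s := by
  have := log_le_sub_one_of_pos (div_pos ht hs)
  rw [log_div ht.ne' hs.ne'] at this
  linarith

theorem log_add_one_lt_log_add_div {s t : ℝ} (hs : 0 < s) (ht : 0 < t) (hst : s ≠ t) :
    log t + 1 < log s + t / s := by
  have := log_lt_sub_one_of_pos (div_pos ht hs) (div_ne_one_of_ne hst.symm)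
  rw [log_div ht.ne' hs.ne'] at this
  linarith

theorem mem_Ioo_of_log_add_div_eq {a b t : ℝ} (ha : 0 < a) (hab : a < b)
    (hbal : log b + t / b = log a + t / a) : t ∈ Ioo a b := by
  have hb : 0 < b := ha.trans hab
  have hd : 0 < 1 / a - 1 / b := by rw [sub_pos]; exact one_div_lt_one_div_of_lt ha hab
  have ht : t * (1 / a - 1 / b) = log b - log a := by linear_combination -hbal
  have hup := log_lt_sub_one_of_pos (div_pos hb ha) (div_ne_one_of_ne hab.ne')
  have hlo := log_lt_sub_one_of_pos (div_pos ha hb) (div_ne_one_of_ne hab.ne)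
  rw [log_div hb.ne' ha.ne'] at hup
  rw [log_div ha.ne' hb.ne'] at hlo
  constructor
  · refine lt_of_mul_lt_mul_right ?_ hd.le
    rw [ht]
    calc a * (1 / a - 1 / b) = 1 - a / b := by field_simp
      _ < log b - log a := by linarith
  · refine lt_of_mul_lt_mul_right ?_ hd.le
    rw [ht]
    calc log b - log a < b / a - 1 := hup
      _ = b * (1 / a - 1 / b) := by field_simp

theorem log_add_div_eq_of_mul_sub_eq {a b t : ℝ} (ha : 0 < a) (hb : 0 < b)
    (ht : t * (b - a) = a * b * log (b / a)) : log b + t / b = log a + t / a := by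
  rw [log_div hb.ne' ha.ne'] at ht
  field_simp
  linear_combination -ht

noncomputable def logLinCertificate (θ₂ a t : ℝ) : Fin 3 → ℝ :=
  let β := 2 / (log a + t / a - (log t + 1))
  ![1 - β * (log a + t / a), β, β * t / θ₂]

theorem fLogLin_dotProduct_logLinCertificate {θ₂ : ℝ} (hθ₂ : θ₂ ≠ 0) (θ₃ a t x : ℝ) :
    fLogLin θ₂ θ₃ x ⬝ᵥ logLinCertificate θ₂ a t =
      1 + 2 / (log a + t / a - (log t + 1)) *
        (log (x + θ₃) + t / (x + θ₃) - (log a + t / a)) := by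
  simp only [fLogLin, logLinCertificate, dotProduct, Fin.sum_univ_three, cons_val_zero,
    cons_val_one, cons_val_two, head_cons, tail_cons]
  generalize 2 / (log a + t / a - (log t + 1)) = β
  rw [show θ₂ / (x + θ₃) * (β * t / θ₂) = β * (t / (x + θ₃)) by field_simp]
  ring

theorem sq_fLogLin_dotProduct_logLinCertificate_le_one {θ₂ θ₃ a b t x : ℝ} (hθ₂ : θ₂ ≠ 0)
    (ha : 0 < a) (hab : a < b) (hbal : log b + t / b = log a + t / a) (hx : x + θ₃ ∈ Icc a b) :
    (fLogLin θ₂ θ₃ x ⬝ᵥ logLinCertificate θ₂ a t) ^ 2 ≤ 1 := by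
  obtain ⟨hat, -⟩ := mem_Ioo_of_log_add_div_eq ha hab hbal
  have ht : 0 < t := ha.trans hat
  have hΔ := sub_pos.2 (log_add_one_lt_log_add_div ha ht hat.ne)
  have hup := log_add_div_le_of_mem_Icc ha ht.le hbal hx
  have hlo := log_add_one_le_log_add_div (ha.trans_le hx.1) ht
  rw [fLogLin_dotProduct_logLinCertificate hθ₂, sq_le_one_iff_abs_le_one, abs_le]
  set Δ := log a + t / a - (log t + 1)
  set δ := log (x + θ₃) + t / (x + θ₃) - (log a + t / a)
  have hneg : 2 / Δ * δ ≤ 0 := mul_nonpos_of_nonneg_of_nonpos (by positivity) (by linarith)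
  have hge : -2 ≤ 2 / Δ * δ := by
    rw [div_mul_eq_mul_div, le_div_iff₀ hΔ]
    linarith
  constructor <;> linarith

theorem fLogLin_dotProduct_logLinCertificate_of_add_eq_left {θ₂ θ₃ x a : ℝ} (hθ₂ : θ₂ ≠ 0)
    (t : ℝ) (hx : x + θ₃ = a) : fLogLin θ₂ θ₃ x ⬝ᵥ logLinCertificate θ₂ a t = 1 := by
  rw [fLogLin_dotProduct_logLinCertificate hθ₂, hx, sub_self, mul_zero, add_zero]

theorem fLogLin_dotProduct_logLinCertificate_of_add_eq_right {θ₂ θ₃ x a b t : ℝ} (hθ₂ : θ₂ ≠ 0)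
    (hbal : log b + t / b = log a + t / a) (hx : x + θ₃ = b) :
    fLogLin θ₂ θ₃ x ⬝ᵥ logLinCertificate θ₂ a t = 1 := by
  rw [fLogLin_dotProduct_logLinCertificate hθ₂, hx, hbal, sub_self, mul_zero, add_zero]

theorem fLogLin_dotProduct_logLinCertificate_of_add_eq_center {θ₂ θ₃ x a t : ℝ} (hθ₂ : θ₂ ≠ 0)
    (ha : 0 < a) (hat : a < t) (hx : x + θ₃ = t) :
    fLogLin θ₂ θ₃ x ⬝ᵥ logLinCertificate θ₂ a t = -1 := by
  have hΔ := sub_pos.2 (log_add_one_lt_log_add_div ha (ha.trans hat) hat.ne)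
  rw [fLogLin_dotProduct_logLinCertificate hθ₂, hx, div_self (ha.trans hat).ne',
    show log t + 1 - (log a + t / a) = -(log a + t / a - (log t + 1)) by ring, mul_neg,
    div_mul_cancel₀ _ hΔ.ne']
  norm_num

theorem det_logLin_rows_ne_zero {θ₂ a b t : ℝ} (hθ₂ : θ₂ ≠ 0) (ha : 0 < a) (hab : a < b)
    (hbal : log b + t / b = log a + t / a) :
    (Matrix.of ![![1, log a, θ₂ / a], ![1, log t, θ₂ / t], ![1, log b, θ₂ / b]]).det ≠ 0 := by
  obtain ⟨hat, -⟩ := mem_Ioo_of_log_add_div_eq ha hab hbal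
  have ht : 0 < t := ha.trans hat
  have hΔ := log_add_one_lt_log_add_div ha ht hat.ne
  have hdet : (Matrix.of ![![1, log a, θ₂ / a], ![1, log t, θ₂ / t], ![1, log b, θ₂ / b]]).det =
      θ₂ * (log t + 1 - (log a + t / a)) * (1 / b - 1 / a) := by
    rw [det_fin_three]
    simp only [of_apply, cons_val_zero, cons_val_one, cons_val_two, head_cons, tail_cons]
    rw [show log b = log a + t / a - t / b by linarith]
    field_simp
    ring
  rw [hdet]
  refine mul_ne_zero (mul_ne_zero hθ₂ (by linarith)) (sub_ne_zero.2 ?_)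
  exact (one_div_lt_one_div_of_lt ha hab).ne

theorem isUnit_det_logLinThreePoint {θ₂ θ₃ L U xl ω : ℝ} (hθ₂ : θ₂ ≠ 0) (hL : 0 < L + θ₃)
    (hLU : L < U) (hbal : log (U + θ₃) + (xl + θ₃) / (U + θ₃) =
      log (L + θ₃) + (xl + θ₃) / (L + θ₃))
    (hω : 2 * ω * (log (L + θ₃) - log (U + θ₃)) = log (xl + θ₃) - log (U + θ₃)) :
    IsUnit (ω • logLinInfo θ₂ θ₃ L + (1 / 2 : ℝ) • logLinInfo θ₂ θ₃ xl +
      (1 / 2 - ω) • logLinInfo θ₂ θ₃ U).det := by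
  have hab : L + θ₃ < U + θ₃ := by linarith
  obtain ⟨hat, htb⟩ := mem_Ioo_of_log_add_div_eq hL hab hbal
  have hlat := log_lt_log hL hat
  have hltb := log_lt_log (hL.trans hat) htb
  have hω₀ : 0 < ω := by nlinarith
  have hω₁ : ω < 1 / 2 := by nlinarith
  rw [isUnit_iff_ne_zero, logLinInfo, logLinInfo, logLinInfo, det_smul_vecMulVec_add_three]
  exact mul_ne_zero (by positivity) (pow_ne_zero 2 (det_logLin_rows_ne_zero hθ₂ hL hab hbal))

section ThreePoint

variable {θ₂ θ₃ L U xl ω : ℝ} {u : Fin 3 → ℝ}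

theorem logLinThreePoint_mulVec_eq_smul_single
    (hL : fLogLin θ₂ θ₃ L ⬝ᵥ u = 1) (hxl : fLogLin θ₂ θ₃ xl ⬝ᵥ u = -1)
    (hU : fLogLin θ₂ θ₃ U ⬝ᵥ u = 1)
    (hω : 2 * ω * (log (L + θ₃) - log (U + θ₃)) = log (xl + θ₃) - log (U + θ₃)) :
    ∃ κ : ℝ, (ω • logLinInfo θ₂ θ₃ L + (1 / 2 : ℝ) • logLinInfo θ₂ θ₃ xl +
      (1 / 2 - ω) • logLinInfo θ₂ θ₃ U) *ᵥ u = κ • Pi.single 2 1 := by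
  refine ⟨ω * (θ₂ / (L + θ₃)) - 1 / 2 * (θ₂ / (xl + θ₃)) + (1 / 2 - ω) * (θ₂ / (U + θ₃)), ?_⟩
  rw [logLinInfo, logLinInfo, logLinInfo, smul_vecMulVec_add_three_mulVec, hL, hxl, hU]
  ext i
  fin_cases i
  · simp [fLogLin]
    ring
  · simp [fLogLin]
    linear_combination hω / 2
  · simp [fLogLin]
    ring

theorem logLinThreePoint_dotProduct_mulVec
    (hL : fLogLin θ₂ θ₃ L ⬝ᵥ u = 1) (hxl : fLogLin θ₂ θ₃ xl ⬝ᵥ u = -1)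
    (hU : fLogLin θ₂ θ₃ U ⬝ᵥ u = 1) :
    u ⬝ᵥ ((ω • logLinInfo θ₂ θ₃ L + (1 / 2 : ℝ) • logLinInfo θ₂ θ₃ xl +
      (1 / 2 - ω) • logLinInfo θ₂ θ₃ U) *ᵥ u) = 1 := by
  rw [logLinInfo, logLinInfo, logLinInfo, smul_vecMulVec_add_three_mulVec]
  simp [dotProduct_comm u, hL, hxl, hU]
  ring

end ThreePoint

theorem stmt12_general (θ₂ θ₃ : ℝ) (hθ₂ : 0 < θ₂) (hθ₃ : 0 < θ₃) (L U : ℝ)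
    (hL : 0 < L) (hLU : L < U)
    (xl ωl : ℝ)
    (hxl : xl = (L + θ₃) * (U + θ₃) / (U - L) * Real.log ((U + θ₃) / (L + θ₃)) - θ₃)
    (hωl : ωl = (Real.log (xl + θ₃) - Real.log (U + θ₃)) /
      (2 * (Real.log (L + θ₃) - Real.log (U + θ₃)))) :
    IsUnit (ωl • logLinInfo θ₂ θ₃ L + (1 / 2 : ℝ) • logLinInfo θ₂ θ₃ xl +
        (1 / 2 - ωl) • logLinInfo θ₂ θ₃ U).det ∧
    ∀ ξ : Design (Set.Icc L U), IsUnit (infoMat (logLinInfo θ₂ θ₃) ξ).det →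
      (ωl • logLinInfo θ₂ θ₃ L + (1 / 2 : ℝ) • logLinInfo θ₂ θ₃ xl +
        (1 / 2 - ωl) • logLinInfo θ₂ θ₃ U)⁻¹ 2 2 ≤
      (infoMat (logLinInfo θ₂ θ₃) ξ)⁻¹ 2 2 := by
  set a := L + θ₃
  set b := U + θ₃
  set t := xl + θ₃
  have ha : 0 < a := by positivity
  have hab : a < b := by simpa [a, b] using hLU
  have hbal : log b + t / b = log a + t / a :=
    log_add_div_eq_of_mul_sub_eq ha (ha.trans hab) (by
      rw [show t = a * b / (U - L) * log (b / a) by simp [t, hxl]]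
      field_simp [(sub_pos.2 hLU).ne']
      ring)
  have hω : 2 * ωl * (log a - log b) = log t - log b := by
    rw [hωl]
    field_simp [sub_ne_zero.2 (log_lt_log ha hab).ne]
  have hψL := fLogLin_dotProduct_logLinCertificate_of_add_eq_left hθ₂.ne' t (rfl : L + θ₃ = a)
  have hψxl := fLogLin_dotProduct_logLinCertificate_of_add_eq_center hθ₂.ne' ha
    (mem_Ioo_of_log_add_div_eq ha hab hbal).1 (rfl : xl + θ₃ = t)
  have hψU := fLogLin_dotProduct_logLinCertificate_of_add_eq_right hθ₂.ne' hbal (rfl : U + θ₃ = b)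
  have hdet := isUnit_det_logLinThreePoint hθ₂.ne' ha hLU hbal hω
  obtain ⟨κ, hMu⟩ := logLinThreePoint_mulVec_eq_smul_single hψL hψxl hψU hω
  refine ⟨hdet, fun ξ hξ => ?_⟩
  have key := dotProduct_inv_mulVec_le_of_certificate (fLogLin θ₂ θ₃) ξ hdet hMu
    (logLinThreePoint_dotProduct_mulVec hψL hψxl hψU)
    (fun x hx => sq_fLogLin_dotProduct_logLinCertificate_le_one hθ₂.ne' ha hab hbal
      ⟨by linarith [hx.1], by linarith [hx.2]⟩) hξ
  unfold logLinInfo at key ⊢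
  simpa [mulVec_single_one] using key

/-- the design with weights (ω_l*, 1/2, 1/2 − ω_l*) at `L`, `x_l*`, `U` is
e₃-optimal (c-optimal for θ₃) for the log-linear model.
Here `x_l* = (L+θ₃)(U+θ₃)/(U−L) · log((U+θ₃)/(L+θ₃)) − θ₃` and
`ω_l* = (log(x_l*+θ₃) − log(U+θ₃)) / (2(log(L+θ₃) − log(U+θ₃)))`. -/
theorem stmt12 (θ₁ θ₂ θ₃ : ℝ) (hθ₂ : 0 < θ₂) (hθ₃ : 0 < θ₃) (L U : ℝ)
    (hL : 0 < L) (hLU : L < U)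
    (xl ωl : ℝ)
    (hxl : xl = (L + θ₃) * (U + θ₃) / (U - L) * Real.log ((U + θ₃) / (L + θ₃)) - θ₃)
    (hωl : ωl = (Real.log (xl + θ₃) - Real.log (U + θ₃)) /
      (2 * (Real.log (L + θ₃) - Real.log (U + θ₃)))) :
    IsUnit (ωl • logLinInfo θ₂ θ₃ L + (1 / 2 : ℝ) • logLinInfo θ₂ θ₃ xl +
        (1 / 2 - ωl) • logLinInfo θ₂ θ₃ U).det ∧
    ∀ ξ : Design (Set.Icc L U), IsUnit (infoMat (logLinInfo θ₂ θ₃) ξ).det →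
      (ωl • logLinInfo θ₂ θ₃ L + (1 / 2 : ℝ) • logLinInfo θ₂ θ₃ xl +
        (1 / 2 - ωl) • logLinInfo θ₂ θ₃ U)⁻¹ 2 2 ≤
      (infoMat (logLinInfo θ₂ θ₃) ξ)⁻¹ 2 2 :=
  stmt12_general θ₂ θ₃ hθ₂ hθ₃ L U hL hLU xl ωl hxl hωl
end
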